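/- arXiv:1811.12480 — 7 statements merged into one kernel-verified Lean document; each statement's English description precedes it below -/
import Mathlib

section
/- Let 0 < a < b < R be real numbers. Define the compressed coordinate transformation ζ : [0, b] → ℝ by ζ(r) = r for r ∈ [0, a) and ζ(r) = η(r) for r ∈ [a, b], where η(r) = (a²(R−b) + r(a² + (b−2a)R))/((b−r)(R−b) + (b−a)²). Then ζ is continuously differentiable on [0, b], ζ(r) > 0 for all r ∈ (0, b], and ζ is strictly increasing on [0, b] (indeed ζ'(r) > 0 for all r ∈ [0, b]). -/
/-!
Writing `c = b + (b - a)² / (R - b)`, the denominator of `η` is `(R - b) (c - r)`, and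
`η r = r + (r - a)² / (c - r)`. Hence on `(-∞, c) ⊇ [0, b]` the map `ζ` is
`r ↦ r + max (r - a) 0 ² / (c - r)`, which is `C¹` because `s ↦ max s 0 ²` is, and whose
derivative `1 + (2 m (c - r) + m²) / (c - r)²`, with `m = max (r - a) 0`, is at least `1`.
-/

open Set Filter Topology

theorem hasDerivAt_max_sub_zero_sq (a x : ℝ) :
    HasDerivAt (fun r => max (r - a) 0 ^ 2) (2 * max (x - a) 0) x := by
  refine hasDerivAt_of_hasDerivAt_of_ne' (g := fun y => 2 * max (y - a) 0) (x := a)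
    (fun y hy => ?_) (by fun_prop) (by fun_prop) x
  rcases hy.lt_or_gt with hya | hay
  · have hzero : (fun r => max (r - a) 0 ^ 2) =ᶠ[𝓝 y] fun _ => 0 := by
      filter_upwards [Iio_mem_nhds hya] with r hr
      simp [max_eq_right (sub_nonpos.2 (mem_Iio.1 hr).le)]
    rw [max_eq_right (sub_nonpos.2 hya.le), mul_zero]
    exact (hasDerivAt_const y 0).congr_of_eventuallyEq hzero
  · have hsq : (fun r => max (r - a) 0 ^ 2) =ᶠ[𝓝 y] fun r => (r - a) ^ 2 := by
      filter_upwards [Ioi_mem_nhds hay] with r hr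
      rw [max_eq_left (sub_nonneg.2 (mem_Ioi.1 hr).le)]
    rw [max_eq_left (sub_nonneg.2 hay.le)]
    simpa using (((hasDerivAt_id y).sub_const a).pow 2).congr_of_eventuallyEq hsq

theorem contDiff_max_sub_zero_sq (a : ℝ) : ContDiff ℝ 1 fun r => max (r - a) 0 ^ 2 := by
  refine contDiff_one_iff_deriv.2 ⟨fun x => (hasDerivAt_max_sub_zero_sq a x).differentiableAt, ?_⟩
  rw [funext fun x => (hasDerivAt_max_sub_zero_sq a x).deriv]
  fun_prop

noncomputable def compress (a c r : ℝ) : ℝ := r + max (r - a) 0 ^ 2 / (c - r)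

section compress

variable {a c r : ℝ}

theorem contDiffOn_compress : ContDiffOn ℝ 1 (compress a c) (Iio c) :=
  contDiffOn_id.add <| (contDiff_max_sub_zero_sq a).contDiffOn.div (by fun_prop)
    fun _ hr => (sub_pos.2 hr).ne'

theorem hasDerivAt_compress (hr : r < c) :
    HasDerivAt (compress a c)
      (1 + (2 * max (r - a) 0 * (c - r) + max (r - a) 0 ^ 2) / (c - r) ^ 2) r := by
  have hquot := (hasDerivAt_max_sub_zero_sq a r).div ((hasDerivAt_id' r).const_sub c)
    (sub_pos.2 hr).ne'
  exact ((hasDerivAt_id' r).add hquot).congr_deriv (by ring)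

theorem one_le_deriv_compress (hr : r < c) : 1 ≤ deriv (compress a c) r := by
  rw [(hasDerivAt_compress hr).deriv, le_add_iff_nonneg_right]
  have hcr := sub_pos.2 hr
  have hm : 0 ≤ max (r - a) 0 := le_max_right _ _
  positivity

theorem le_compress (hr : r < c) : r ≤ compress a c r :=
  le_add_of_nonneg_right (div_nonneg (sq_nonneg _) (sub_pos.2 hr).le)

end compress

theorem div_eq_compress {a b R r : ℝ} (hbR : b < R) (har : a ≤ r)
    (hr : r < b + (b - a) ^ 2 / (R - b)) :
    (a ^ 2 * (R - b) + r * (a ^ 2 + (b - 2 * a) * R)) / ((b - r) * (R - b) + (b - a) ^ 2) =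
      compress a (b + (b - a) ^ 2 / (R - b)) r := by
  have hRb : R - b ≠ 0 := (sub_pos.2 hbR).ne'
  have hcr : b + (b - a) ^ 2 / (R - b) - r ≠ 0 := (sub_pos.2 hr).ne'
  have hden : (b - r) * (R - b) + (b - a) ^ 2 = (R - b) * (b + (b - a) ^ 2 / (R - b) - r) := by
    field_simp
    ring
  have hnum : a ^ 2 * (R - b) + r * (a ^ 2 + (b - 2 * a) * R) =
      r * ((b - r) * (R - b) + (b - a) ^ 2) + (R - b) * (r - a) ^ 2 := by ring
  rw [compress, max_eq_left (sub_nonneg.2 har), hnum, hden, add_div, mul_div_mul_left _ _ hRb,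
    mul_div_cancel_right₀ _ (mul_ne_zero hRb hcr)]

theorem stmt2_general (a b R : ℝ) (hab : a < b) (hbR : b < R)
    (η ζ : ℝ → ℝ)
    (hη : ∀ r : ℝ, η r =
      (a ^ 2 * (R - b) + r * (a ^ 2 + (b - 2 * a) * R)) / ((b - r) * (R - b) + (b - a) ^ 2))
    (hζ : ∀ r : ℝ, ζ r = if r < a then r else η r) :
    ContDiffOn ℝ 1 ζ (Set.Icc 0 b) ∧
    (∀ r ∈ Set.Ioc (0 : ℝ) b, 0 < ζ r) ∧
    StrictMonoOn ζ (Set.Icc 0 b) ∧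
    (∀ r ∈ Set.Icc (0 : ℝ) b, 0 < deriv ζ r) := by
  set c := b + (b - a) ^ 2 / (R - b)
  have hbc : b < c := by
    have := sub_pos.2 hbR
    have := sub_ne_zero.2 hab.ne'
    exact lt_add_of_pos_right b (by positivity)
  have hζc : EqOn ζ (compress a c) (Iio c) := fun r hr => by
    rw [hζ]
    split_ifs with hra
    · simp [compress, max_eq_right (sub_nonpos.2 hra.le)]
    · rw [hη, div_eq_compress hbR (not_lt.1 hra) hr]
  have hsub : Icc 0 b ⊆ Iio c := fun r hr => hr.2.trans_lt hbc
  have hderiv : ∀ r ∈ Icc (0 : ℝ) b, 0 < deriv ζ r := fun r hr => by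
    rw [(hζc.eventuallyEq_of_mem (isOpen_Iio.mem_nhds (hsub hr))).deriv_eq]
    exact zero_lt_one.trans_le (one_le_deriv_compress (hsub hr))
  have hC1 : ContDiffOn ℝ 1 ζ (Icc 0 b) := (contDiffOn_compress.congr hζc).mono hsub
  refine ⟨hC1, fun r hr => ?_, strictMonoOn_of_deriv_pos (convex_Icc 0 b) hC1.continuousOn
    fun r hr => hderiv r (interior_subset hr), hderiv⟩
  rw [hζc (hsub (Ioc_subset_Icc_self hr))]
  exact hr.1.trans_le (le_compress (hsub (Ioc_subset_Icc_self hr)))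

/-- Let `0 < a < b < R` be real numbers. Define the compressed coordinate
transformation `ζ` by `ζ(r) = r` for `r ∈ [0, a)` and `ζ(r) = η(r)` for `r ∈ [a, b]`, where
`η(r) = (a²(R−b) + r(a² + (b−2a)R))/((b−r)(R−b) + (b−a)²)`. Then `ζ` is continuously
differentiable on `[0, b]`, `ζ(r) > 0` for all `r ∈ (0, b]`, and `ζ` is strictly increasing
on `[0, b]` (indeed `ζ'(r) > 0` for all `r ∈ [0, b]`). -/
theorem stmt2 (a b R : ℝ) (ha : 0 < a) (hab : a < b) (hbR : b < R)
    (η ζ : ℝ → ℝ)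
    (hη : ∀ r : ℝ, η r =
      (a ^ 2 * (R - b) + r * (a ^ 2 + (b - 2 * a) * R)) / ((b - r) * (R - b) + (b - a) ^ 2))
    (hζ : ∀ r : ℝ, ζ r = if r < a then r else η r) :
    ContDiffOn ℝ 1 ζ (Set.Icc 0 b) ∧
    (∀ r ∈ Set.Ioc (0 : ℝ) b, 0 < ζ r) ∧
    StrictMonoOn ζ (Set.Icc 0 b) ∧
    (∀ r ∈ Set.Icc (0 : ℝ) b, 0 < deriv ζ r) :=
  stmt2_general a b R hab hbR η ζ hη hζ
end

section
/- Let d = 2. Let u : ℝ² → ℝ be twice continuously differentiable and set v = u ∘ Φ on ℝ² \ {0}. Define β(r) = ζ(r)ζ'(r)/r and the matrix field M by M(y)w = (ζ(|y|)/(|y| ζ'(|y|))) P_y(w) + (|y| ζ'(|y|)/ζ(|y|))(w − P_y(w)). Then for every x ∈ ℝ² with x ≠ 0, writing r = |x|, the Laplacian of u satisfies (Δu)(Φ(x)) = β(r)⁻¹ · div( y ↦ M(y) ∇v(y) )(x). -/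
open scoped RealInnerProductSpace

noncomputable section

/-- The orthogonal projection of `w` onto the span of `e_r = x/‖x‖`. -/
def radialProj {E : Type*} [NormedAddCommGroup E] [InnerProductSpace ℝ E]
    (x w : E) : E :=
  ⟪w, ‖x‖⁻¹ • x⟫ • (‖x‖⁻¹ • x)

/-- The divergence of a vector field: the trace of its Jacobian. -/
def diverg {E : Type*} [NormedAddCommGroup E] [NormedSpace ℝ E]
    (u : E → E) (x : E) : ℝ :=
  LinearMap.trace ℝ E (fderiv ℝ u x)

/-- The Laplacian: the divergence of the gradient. -/
def lap {E : Type*} [NormedAddCommGroup E] [InnerProductSpace ℝ E] [CompleteSpace E]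
    (u : E → ℝ) (x : E) : ℝ :=
  diverg (gradient u) x

/-! ### Auxiliary material -/

lemma aux_hasFDerivAt_norm {E : Type*} [NormedAddCommGroup E] [InnerProductSpace ℝ E]
    {y : E} (hy : y ≠ 0) :
    HasFDerivAt (fun z : E => ‖z‖) (‖y‖⁻¹ • innerSL ℝ y) y := by
  have h0 : ‖y‖ ≠ 0 := norm_ne_zero_iff.mpr hy
  have h1 : HasFDerivAt (fun z : E => ‖z‖ ^ 2) (2 • (innerSL ℝ y)) y :=
    (hasStrictFDerivAt_norm_sq y).hasFDerivAt
  have h2 : HasDerivAt (√·) (1 / (2 * ‖y‖)) (‖y‖ ^ 2) := by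
    have := Real.hasDerivAt_sqrt (x := ‖y‖ ^ 2) (by positivity)
    simpa [Real.sqrt_sq (norm_nonneg y)] using this
  have h3 := h2.comp_hasFDerivAt y h1
  have h4 : ((√·) ∘ fun z : E => ‖z‖ ^ 2) = fun z : E => ‖z‖ := by
    funext z; exact Real.sqrt_sq (norm_nonneg z)
  rw [h4] at h3
  have h5 : (‖y‖⁻¹ • innerSL ℝ y) = (1 / (2 * ‖y‖)) • (2 • (innerSL ℝ y)) := by
    rw [← Nat.cast_smul_eq_nsmul ℝ, smul_smul]
    congr 1
    push_cast
    field_simp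
  rw [h5]
  exact h3

private abbrev E2 := EuclideanSpace ℝ (Fin 2)

private def eb (i : Fin 2) : E2 := EuclideanSpace.single i 1

private lemma inner_eb (z : E2) (i : Fin 2) : ⟪z, eb i⟫ = z i := by
  simp [eb, EuclideanSpace.inner_single_right]

private lemma eb_decomp (w : E2) : w = w 0 • eb 0 + w 1 • eb 1 := by
  ext i
  fin_cases i <;> simp [eb, EuclideanSpace.single_apply]

private lemma inner_coords (z w : E2) : ⟪z, w⟫ = z 0 * w 0 + z 1 * w 1 := by
  simp [PiLp.inner_apply, Fin.sum_univ_two, RCLike.inner_apply, mul_comm]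

private lemma normsq_coords (z : E2) : ‖z‖ ^ 2 = z 0 ^ 2 + z 1 ^ 2 := by
  have := real_inner_self_eq_norm_sq z
  rw [inner_coords] at this
  nlinarith [this]

private lemma trace_eq (T : E2 →L[ℝ] E2) :
    LinearMap.trace ℝ E2 (T : E2 →ₗ[ℝ] E2) = T (eb 0) 0 + T (eb 1) 1 := by
  classical
  rw [LinearMap.trace_eq_matrix_trace ℝ ((EuclideanSpace.basisFun (Fin 2) ℝ).toBasis)]
  rw [Matrix.trace_fin_two]
  congr 1 <;>
  · simp [LinearMap.toMatrix_apply, EuclideanSpace.basisFun_toBasis, eb]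

private lemma inner_grad (f : E2 → ℝ) (y w : E2) :
    ⟪gradient f y, w⟫ = fderiv ℝ f y w :=
  InnerProductSpace.toDual_symm_apply

/-- The scalar factor `ζ(r)/r`. -/
private def sf (ζ : ℝ → ℝ) (y : E2) : ℝ := ζ ‖y‖ / ‖y‖

/-- The scalar factor `(ζ'(r) - ζ(r)/r)/r²`. -/
private def tf (ζ : ℝ → ℝ) (y : E2) : ℝ := (deriv ζ ‖y‖ - ζ ‖y‖ / ‖y‖) / ‖y‖ ^ 2

/-- Explicit derivative of the radial map. -/
private def Aexp (ζ : ℝ → ℝ) (y : E2) : E2 →L[ℝ] E2 :=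
  sf ζ y • ContinuousLinearMap.id ℝ E2 + tf ζ y • (innerSL ℝ y).smulRight y

private lemma Aexp_apply (ζ : ℝ → ℝ) (y w : E2) :
    Aexp ζ y w = sf ζ y • w + (tf ζ y * ⟪y, w⟫) • y := by
  simp [Aexp, smul_smul]

private lemma Aexp_coord (ζ : ℝ → ℝ) (y : E2) (i j : Fin 2) :
    Aexp ζ y (eb j) i = (if i = j then sf ζ y else 0) + tf ζ y * y j * y i := by
  rw [Aexp_apply]
  have hj : ⟪y, eb j⟫ = y j := inner_eb y j
  simp only [PiLp.add_apply, PiLp.smul_apply, smul_eq_mul, hj]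
  have : (eb j) i = if i = j then (1:ℝ) else 0 := by
    simp [eb, EuclideanSpace.single_apply, eq_comm]
  rw [this]
  split <;> ring

private lemma st_key (ζ : ℝ → ℝ) {y : E2} (hy : y ≠ 0) :
    sf ζ y + tf ζ y * ‖y‖ ^ 2 = deriv ζ ‖y‖ := by
  have h0 : ‖y‖ ≠ 0 := norm_ne_zero_iff.mpr hy
  simp only [sf, tf]
  field_simp
  ring

private lemma hasFDerivAt_radial (ζ : ℝ → ℝ) (hζ : ContDiff ℝ (⊤ : ℕ∞) ζ)
    {y : E2} (hy : y ≠ 0) :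
    HasFDerivAt (fun z : E2 => (ζ ‖z‖ / ‖z‖) • z) (Aexp ζ y) y := by
  have h0 : ‖y‖ ≠ 0 := norm_ne_zero_iff.mpr hy
  have hn := aux_hasFDerivAt_norm hy
  have hζd : HasDerivAt ζ (deriv ζ ‖y‖) ‖y‖ :=
    ((hζ.differentiable (by simp)) ‖y‖).hasDerivAt
  have hq : HasDerivAt (fun r => ζ r / r)
      ((deriv ζ ‖y‖ * ‖y‖ - ζ ‖y‖ * 1) / ‖y‖ ^ 2) ‖y‖ :=
    hζd.div (hasDerivAt_id ‖y‖) h0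
  have hs := hq.comp_hasFDerivAt y hn
  have hmain := hs.smul (hasFDerivAt_id y)
  refine HasFDerivAt.congr_fderiv (f := fun z : E2 => (ζ ‖z‖ / ‖z‖) • z) hmain ?_
  symm
  ext w
  simp only [Aexp, ContinuousLinearMap.add_apply, ContinuousLinearMap.coe_smul',
    Pi.smul_apply, ContinuousLinearMap.coe_id', id_eq, ContinuousLinearMap.smulRight_apply,
    ContinuousLinearMap.smul_apply, innerSL_apply_apply, smul_eq_mul]
  simp only [PiLp.add_apply, PiLp.smul_apply, smul_eq_mul, Function.comp_apply, sf, tf]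
  field_simp

/-- The Hessian-type derivative of the gradient. -/
private def Hmap (u : E2 → ℝ) (z : E2) : E2 →L[ℝ] E2 :=
  ((InnerProductSpace.toDual ℝ E2).symm.toContinuousLinearEquiv.toContinuousLinearMap).comp
    (fderiv ℝ (fderiv ℝ u) z)

private lemma Hmap_apply (u : E2 → ℝ) (z w : E2) (i : Fin 2) :
    Hmap u z w i = fderiv ℝ (fderiv ℝ u) z w (eb i) := by
  rw [← inner_eb (Hmap u z w) i]
  exact InnerProductSpace.toDual_symm_apply

private lemma hasFDerivAt_gradient (u : E2 → ℝ) (hu : ContDiff ℝ 2 u) (z : E2) :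
    HasFDerivAt (gradient u) (Hmap u z) z := by
  have h1 : ContDiffAt ℝ 1 (fderiv ℝ u) z :=
    hu.contDiffAt.fderiv_right (by norm_num)
  have h2 : HasFDerivAt (fderiv ℝ u) (fderiv ℝ (fderiv ℝ u) z) z :=
    (h1.differentiableAt (by norm_num)).hasFDerivAt
  have h3 := ((InnerProductSpace.toDual ℝ
      E2).symm.toContinuousLinearEquiv.toContinuousLinearMap).hasFDerivAt.comp z h2
  exact h3

private lemma lap_eq (u : E2 → ℝ) (hu : ContDiff ℝ 2 u) (z : E2) :
    lap u z = Hmap u z (eb 0) 0 + Hmap u z (eb 1) 1 := by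
  rw [lap, diverg, (hasFDerivAt_gradient u hu z).fderiv, trace_eq]

/-- The Piola-transform vector field. -/
private def Fc (ζ : ℝ → ℝ) (u : E2 → ℝ) (Φ : E2 → E2) (y : E2) : E2 :=
  (WithLp.equiv 2 (Fin 2 → ℝ)).symm
    ![fderiv ℝ Φ y (eb 1) 1 * gradient u (Φ y) 0 - fderiv ℝ Φ y (eb 1) 0 * gradient u (Φ y) 1,
      fderiv ℝ Φ y (eb 0) 0 * gradient u (Φ y) 1 - fderiv ℝ Φ y (eb 0) 1 * gradient u (Φ y) 0]

private lemma Fc_apply0 (ζ : ℝ → ℝ) (u : E2 → ℝ) (Φ : E2 → E2) (y : E2) :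
    Fc ζ u Φ y 0 =
      fderiv ℝ Φ y (eb 1) 1 * gradient u (Φ y) 0 -
        fderiv ℝ Φ y (eb 1) 0 * gradient u (Φ y) 1 := rfl

private lemma Fc_apply1 (ζ : ℝ → ℝ) (u : E2 → ℝ) (Φ : E2 → E2) (y : E2) :
    Fc ζ u Φ y 1 =
      fderiv ℝ Φ y (eb 0) 0 * gradient u (Φ y) 1 -
        fderiv ℝ Φ y (eb 0) 1 * gradient u (Φ y) 0 := rfl

set_option maxHeartbeats 1000000 in
/-- d = 2: For the radial change of variables `Φ(x) = (ζ(|x|)/|x|) x`,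
`v = u ∘ Φ`, `β(r) = ζ(r)ζ'(r)/r` and
`M(y)w = (ζ(|y|)/(|y|ζ'(|y|))) P_y(w) + (|y|ζ'(|y|)/ζ(|y|))(w − P_y(w))`, the Laplacian
satisfies `(Δu)(Φ(x)) = β(r)⁻¹ · div(y ↦ M(y) ∇v(y))(x)`, `r = |x|`. -/
theorem stmt5 (ζ : ℝ → ℝ) (hζ : ContDiff ℝ (⊤ : ℕ∞) ζ)
    (hζpos : ∀ r : ℝ, 0 < r → 0 < ζ r)
    (hζ'pos : ∀ r : ℝ, 0 < r → 0 < deriv ζ r)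
    (Φ : EuclideanSpace ℝ (Fin 2) → EuclideanSpace ℝ (Fin 2))
    (hΦ : ∀ x, Φ x = (ζ ‖x‖ / ‖x‖) • x)
    (u : EuclideanSpace ℝ (Fin 2) → ℝ) (hu : ContDiff ℝ 2 u)
    (v : EuclideanSpace ℝ (Fin 2) → ℝ) (hv : v = u ∘ Φ)
    (β : ℝ → ℝ) (hβ : ∀ r : ℝ, β r = ζ r * deriv ζ r / r)
    (M : EuclideanSpace ℝ (Fin 2) → EuclideanSpace ℝ (Fin 2) → EuclideanSpace ℝ (Fin 2))
    (hM : ∀ y w, M y w = (ζ ‖y‖ / (‖y‖ * deriv ζ ‖y‖)) • radialProj y w +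
      ((‖y‖ * deriv ζ ‖y‖) / ζ ‖y‖) • (w - radialProj y w)) :
    ∀ x : EuclideanSpace ℝ (Fin 2), x ≠ 0 →
      lap u (Φ x) = (β ‖x‖)⁻¹ * diverg (fun y => M y (gradient v y)) x := by
  have hΦfun : Φ = fun z : E2 => (ζ ‖z‖ / ‖z‖) • z := funext hΦ
  -- Step 1 : pointwise identification with the Piola field
  have hFeq : ∀ y : E2, y ≠ 0 → M y (gradient v y) = Fc ζ u Φ y := by
    intro y hy
    have hR0 : (0:ℝ) < ‖y‖ := norm_pos_iff.mpr hy
    have hR : ‖y‖ ≠ 0 := ne_of_gt hR0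
    have hZ : ζ ‖y‖ ≠ 0 := (hζpos _ hR0).ne'
    have hZ' : deriv ζ ‖y‖ ≠ 0 := (hζ'pos _ hR0).ne'
    have hΦd : HasFDerivAt Φ (Aexp ζ y) y := by
      rw [hΦfun]; exact hasFDerivAt_radial ζ hζ hy
    have hfd : fderiv ℝ Φ y = Aexp ζ y := hΦd.fderiv
    set h := gradient u (Φ y) with hh
    have hfu : ∀ w, fderiv ℝ u (Φ y) w = ⟪h, w⟫ := fun w => (inner_grad u (Φ y) w).symm
    have hfv : fderiv ℝ v y = (fderiv ℝ u (Φ y)).comp (Aexp ζ y) := by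
      rw [hv, fderiv_comp y ((hu.differentiable (by norm_num)) (Φ y)) hΦd.differentiableAt, hfd]
    have hgradv : gradient v y = sf ζ y • h + (tf ζ y * ⟪y, h⟫) • y := by
      apply ext_inner_right ℝ
      intro w
      rw [inner_grad, hfv]
      simp only [ContinuousLinearMap.coe_comp', Function.comp_apply]
      rw [hfu, Aexp_apply]
      simp only [inner_add_left, inner_add_right, real_inner_smul_left, real_inner_smul_right]
      rw [real_inner_comm h y]
      ring
    have hq : ⟪gradient v y, ‖y‖⁻¹ • y⟫ = ‖y‖⁻¹ * (deriv ζ ‖y‖ * ⟪y, h⟫) := by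
      have hcomm : ⟪y, h⟫ = ⟪h, y⟫ := real_inner_comm h y
      rw [hgradv]
      simp only [real_inner_smul_right, inner_add_left, real_inner_smul_left,
        real_inner_self_eq_norm_sq, hcomm]
      linear_combination (‖y‖⁻¹ * ⟪h, y⟫) * st_key ζ hy
    have hrp : radialProj y (gradient v y) = (deriv ζ ‖y‖ * ⟪y, h⟫ / ‖y‖ ^ 2) • y := by
      have hc : ‖y‖⁻¹ * (deriv ζ ‖y‖ * ⟪y, h⟫) * ‖y‖⁻¹ = deriv ζ ‖y‖ * ⟪y, h⟫ / ‖y‖ ^ 2 := by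
        rw [div_eq_mul_inv, sq, mul_inv]
        ring
      rw [radialProj, hq, smul_smul, hc]
    have hMv : M y (gradient v y) = deriv ζ ‖y‖ • h - (tf ζ y * ⟪y, h⟫) • y := by
      rw [hM, hrp, hgradv]
      match_scalars <;> (simp only [sf, tf]; field_simp; try ring)
    rw [hMv]
    ext i
    fin_cases i
    · show (deriv ζ ‖y‖ • h - (tf ζ y * ⟪y, h⟫) • y) 0 = Fc ζ u Φ y 0
      simp only [PiLp.sub_apply, PiLp.smul_apply, smul_eq_mul]
      rw [Fc_apply0, hfd, Aexp_coord, Aexp_coord, inner_coords y h]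
      norm_num
      linear_combination (-(h 0)) * st_key ζ hy + (tf ζ y * h 0) * normsq_coords y
    · show (deriv ζ ‖y‖ • h - (tf ζ y * ⟪y, h⟫) • y) 1 = Fc ζ u Φ y 1
      simp only [PiLp.sub_apply, PiLp.smul_apply, smul_eq_mul]
      rw [Fc_apply1, hfd, Aexp_coord, Aexp_coord, inner_coords y h]
      norm_num
      linear_combination (-(h 1)) * st_key ζ hy + (tf ζ y * h 1) * normsq_coords y
  -- Step 2 : divergence of the Piola field
  have hdivF : ∀ x : E2, x ≠ 0 →
      diverg (Fc ζ u Φ) x = (sf ζ x * deriv ζ ‖x‖) * lap u (Φ x) := by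
    intro x hx
    have hR0 : (0:ℝ) < ‖x‖ := norm_pos_iff.mpr hx
    have hR : ‖x‖ ≠ 0 := ne_of_gt hR0
    have hΦd : HasFDerivAt Φ (Aexp ζ x) x := by
      rw [hΦfun]; exact hasFDerivAt_radial ζ hζ hx
    have hnorm : ContDiffAt ℝ 2 (fun z : E2 => ‖z‖) x := contDiffAt_id.norm ℝ hx
    have hΦC2 : ContDiffAt ℝ 2 Φ x := by
      rw [hΦfun]
      exact (((hζ.of_le (by exact WithTop.coe_le_coe.mpr le_top)).contDiffAt.comp x hnorm).div hnorm hR).smul contDiffAt_id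
    have hdΦ : HasFDerivAt (fderiv ℝ Φ) (fderiv ℝ (fderiv ℝ Φ) x) x :=
      ((hΦC2.fderiv_right (m := 1) (by norm_num)).differentiableAt (by norm_num)).hasFDerivAt
    set Φ2 := fderiv ℝ (fderiv ℝ Φ) x with hΦ2def
    have hsymmΦ : ∀ vv ww : E2, Φ2 vv ww = Φ2 ww vv := hΦC2.isSymmSndFDerivAt (by simp)
    set A := Aexp ζ x with hAdef
    set Hm := Hmap u (Φ x) with hHmdef
    have hgr : HasFDerivAt (fun y => gradient u (Φ y)) (Hm.comp A) x :=
      (hasFDerivAt_gradient u hu (Φ x)).comp x hΦd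
    have hAb : ∀ i j : Fin 2, HasFDerivAt (fun y => fderiv ℝ Φ y (eb j) i)
        ((EuclideanSpace.proj i).comp ((ContinuousLinearMap.apply ℝ E2 (eb j)).comp Φ2)) x :=
      fun i j => (EuclideanSpace.proj (𝕜 := ℝ) i).hasFDerivAt.comp x
        ((ContinuousLinearMap.apply ℝ E2 (eb j)).hasFDerivAt.comp x hdΦ)
    have hC : ∀ i : Fin 2, HasFDerivAt (fun y => gradient u (Φ y) i)
        ((EuclideanSpace.proj i).comp (Hm.comp A)) x :=
      fun i => (EuclideanSpace.proj (𝕜 := ℝ) i).hasFDerivAt.comp x hgr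
    have hc0 := ((hAb 1 1).mul (hC 0)).sub ((hAb 0 1).mul (hC 1))
    have hc1 := ((hAb 0 0).mul (hC 1)).sub ((hAb 1 0).mul (hC 0))
    set D0 := (fun y => fderiv ℝ Φ y (eb 1) 1) x •
        ((EuclideanSpace.proj (0:Fin 2)).comp (Hm.comp A)) +
        (fun y => gradient u (Φ y) 0) x •
        ((EuclideanSpace.proj (1:Fin 2)).comp ((ContinuousLinearMap.apply ℝ E2 (eb 1)).comp Φ2)) -
        ((fun y => fderiv ℝ Φ y (eb 1) 0) x •
        ((EuclideanSpace.proj (1:Fin 2)).comp (Hm.comp A)) +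
        (fun y => gradient u (Φ y) 1) x •
        ((EuclideanSpace.proj (0:Fin 2)).comp ((ContinuousLinearMap.apply ℝ E2 (eb 1)).comp Φ2)))
      with hD0def
    set D1 := (fun y => fderiv ℝ Φ y (eb 0) 0) x •
        ((EuclideanSpace.proj (1:Fin 2)).comp (Hm.comp A)) +
        (fun y => gradient u (Φ y) 1) x •
        ((EuclideanSpace.proj (0:Fin 2)).comp ((ContinuousLinearMap.apply ℝ E2 (eb 0)).comp Φ2)) -
        ((fun y => fderiv ℝ Φ y (eb 0) 1) x •
        ((EuclideanSpace.proj (0:Fin 2)).comp (Hm.comp A)) +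
        (fun y => gradient u (Φ y) 0) x •
        ((EuclideanSpace.proj (1:Fin 2)).comp ((ContinuousLinearMap.apply ℝ E2 (eb 0)).comp Φ2)))
      with hD1def
    have hpi : HasFDerivAt
        (fun y => (fun i : Fin 2 =>
          ![fderiv ℝ Φ y (eb 1) 1 * gradient u (Φ y) 0 -
              fderiv ℝ Φ y (eb 1) 0 * gradient u (Φ y) 1,
            fderiv ℝ Φ y (eb 0) 0 * gradient u (Φ y) 1 -
              fderiv ℝ Φ y (eb 0) 1 * gradient u (Φ y) 0] i))
        (ContinuousLinearMap.pi ![D0, D1]) x := by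
      apply hasFDerivAt_pi''
      intro i
      fin_cases i
      · exact hc0
      · exact hc1
    have hF : HasFDerivAt (Fc ζ u Φ)
        (((PiLp.continuousLinearEquiv 2 ℝ (fun _ : Fin 2 => ℝ)).symm :
            (Fin 2 → ℝ) →L[ℝ] E2).comp (ContinuousLinearMap.pi ![D0, D1])) x := by
      exact (((PiLp.continuousLinearEquiv 2 ℝ (fun _ : Fin 2 => ℝ)).symm :
            (Fin 2 → ℝ) →L[ℝ] E2).hasFDerivAt).comp x hpi
    rw [diverg, hF.fderiv, trace_eq]
    have hLapp : ∀ (k i : Fin 2),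
        (((PiLp.continuousLinearEquiv 2 ℝ (fun _ : Fin 2 => ℝ)).symm :
            (Fin 2 → ℝ) →L[ℝ] E2).comp (ContinuousLinearMap.pi ![D0, D1])) (eb k) i =
          (![D0, D1] i) (eb k) := by
      intro k i
      rfl
    rw [hLapp 0 0, hLapp 1 1]
    simp only [Matrix.cons_val_zero, Matrix.cons_val_one, Matrix.head_cons]
    rw [hD0def, hD1def]
    simp only [ContinuousLinearMap.sub_apply, ContinuousLinearMap.add_apply,
      ContinuousLinearMap.coe_smul', Pi.smul_apply, ContinuousLinearMap.coe_comp',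
      Function.comp_apply, ContinuousLinearMap.apply_apply, smul_eq_mul,
      PiLp.proj_apply]
    rw [show fderiv ℝ Φ x = A from hΦd.fderiv]
    -- symmetry of the second derivative of Φ
    rw [hsymmΦ (eb 1) (eb 0)]
    -- linear expansion of the Hessian terms
    have hHlin : ∀ (z : E2) (i : Fin 2),
        Hm z i = z 0 * Hm (eb 0) i + z 1 * Hm (eb 1) i := by
      intro z i
      conv_lhs => rw [eb_decomp z]
      rw [map_add, map_smul, map_smul]
      simp [PiLp.add_apply, PiLp.smul_apply]
    rw [hHlin (A (eb 0)) 0, hHlin (A (eb 0)) 1, hHlin (A (eb 1)) 0, hHlin (A (eb 1)) 1]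
    -- symmetry of the Hessian of u
    have hHsym : Hm (eb 1) 0 = Hm (eb 0) 1 := by
      rw [hHmdef, Hmap_apply, Hmap_apply]
      exact (hu.contDiffAt.isSymmSndFDerivAt (by simp)) (eb 1) (eb 0)
    rw [hHsym]
    -- coordinates of A
    have hA : ∀ i j : Fin 2, A (eb j) i = (if i = j then sf ζ x else 0) + tf ζ x * x j * x i :=
      fun i j => Aexp_coord ζ x i j
    rw [hA 0 0, hA 1 0, hA 0 1, hA 1 1, lap_eq u hu (Φ x)]
    norm_num
    linear_combination (sf ζ x * (Hm (eb 0) 0 + Hm (eb 1) 1)) * st_key ζ hx -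
      (sf ζ x * tf ζ x * (Hm (eb 0) 0 + Hm (eb 1) 1)) * normsq_coords x
  intro x hx
  have hr0 : (0:ℝ) < ‖x‖ := norm_pos_iff.mpr hx
  have hrne : ‖x‖ ≠ 0 := ne_of_gt hr0
  have hZ : ζ ‖x‖ ≠ 0 := (hζpos _ hr0).ne'
  have hZ' : deriv ζ ‖x‖ ≠ 0 := (hζ'pos _ hr0).ne'
  have hcongr : diverg (fun y => M y (gradient v y)) x = diverg (Fc ζ u Φ) x := by
    unfold diverg
    congr 2
    apply Filter.EventuallyEq.fderiv_eq
    have hne : ∀ᶠ y in nhds x, y ≠ 0 := eventually_ne_nhds hx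
    exact hne.mono fun y hy => hFeq y hy
  rw [hcongr, hdivF x hx, hβ]
  rw [sf]
  field_simp

end
end

section
/- Let d = 2 and let c > 0. Suppose u : ℝ² × ℝ → ℝ is twice continuously differentiable and satisfies the acoustic wave equation (1/c²) ∂ₜ² u(y, t) − Δ_y u(y, t) = 0 for all y ∈ ℝ² and t > 0. Define v(x, t) = u(Φ(x), t) for x ∈ ℝ² \ {0}, β(r) = ζ(r)ζ'(r)/r, and the matrix field M by M(y)w = (ζ(|y|)/(|y| ζ'(|y|))) P_y(w) + (|y| ζ'(|y|)/ζ(|y|))(w − P_y(w)). Then for every x ≠ 0 and t > 0, writing r = |x|, v satisfies the transformed wave equation (β(r)/c²) ∂ₜ² v(x, t) − div( y ↦ M(y) ∇_y v(y, t) )(x) = 0. -/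
open scoped RealInnerProductSpace

noncomputable section

local notation "E2" => EuclideanSpace ℝ (Fin 2)

lemma trace_eq_sum' (T : E2 →L[ℝ] E2) :
    LinearMap.trace ℝ E2 (T : E2 →ₗ[ℝ] E2) =
      ∑ i : Fin 2, T (EuclideanSpace.single i 1) i := by
  rw [LinearMap.trace_eq_matrix_trace ℝ ((EuclideanSpace.basisFun (Fin 2) ℝ).toBasis)]
  simp [Matrix.trace, LinearMap.toMatrix_apply, OrthonormalBasis.coe_toBasis_repr_apply,
    OrthonormalBasis.coe_toBasis, EuclideanSpace.basisFun_repr, EuclideanSpace.basisFun_apply,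
    Matrix.diag]

lemma hasFDerivAt_norm'' {E : Type*} [NormedAddCommGroup E] [InnerProductSpace ℝ E]
    {x : E} (hx : x ≠ 0) :
    HasFDerivAt (fun z : E => ‖z‖) (‖x‖⁻¹ • innerSL ℝ x) x := by
  have hne : ⟪x, x⟫ ≠ 0 := by
    simpa [real_inner_self_eq_norm_sq, pow_eq_zero_iff] using (norm_ne_zero_iff.2 hx)
  have h1 : HasFDerivAt (fun z : E => ⟪z, z⟫)
      ((fderivInnerCLM ℝ (x, x)).comp ((ContinuousLinearMap.id ℝ E).prod
        (ContinuousLinearMap.id ℝ E))) x := (hasFDerivAt_id x).inner ℝ (hasFDerivAt_id x)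
  have h2 := HasDerivAt.comp_hasFDerivAt (f := fun z : E => ⟪z, z⟫) x
    (Real.hasDerivAt_sqrt hne) h1
  have h3 : (fun z : E => Real.sqrt ⟪z, z⟫) = fun z : E => ‖z‖ := by
    funext z
    rw [real_inner_self_eq_norm_mul_norm, Real.sqrt_mul_self (norm_nonneg z)]
  rw [show ((fun x => Real.sqrt x) ∘ fun z : E => ⟪z, z⟫) = fun z : E => ‖z‖ from h3] at h2
  refine h2.congr_fderiv ?_
  ext w
  have hs : Real.sqrt ⟪x, x⟫ = ‖x‖ := by
    rw [real_inner_self_eq_norm_mul_norm, Real.sqrt_mul_self (norm_nonneg x)]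
  simp only [ContinuousLinearMap.smul_apply, innerSL_apply_apply, ContinuousLinearMap.comp_apply,
    ContinuousLinearMap.smul_apply, ContinuousLinearMap.prod_apply, ContinuousLinearMap.id_apply,
    fderivInnerCLM_apply, hs, smul_eq_mul]
  rw [real_inner_comm w x]
  have : ‖x‖ ≠ 0 := norm_ne_zero_iff.2 hx
  field_simp
  ring


lemma keyid (r z0 z1 z2 x0 x1 h00 h01 h10 h11 g0 g1 : ℝ) (hr : 0 < r)
    (hC : x0 ^ 2 + x1 ^ 2 = r ^ 2) :
    z1 * (z0 / r * h00 + (z1 * r - z0) / r ^ 3 * x0 * (x0 * h00 + x1 * h10)) +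
        z2 * (r⁻¹ * x0) * g0 +
      ((z0 / r - z1) / r ^ 2 * (x0 * g0 + x1 * g1) +
        ((z0 / r - z1) / r ^ 2 *
              (x0 * (z0 / r * h00 + (z1 * r - z0) / r ^ 3 * x0 * (x0 * h00 + x1 * h10)) +
                x1 * (z0 / r * h01 + (z1 * r - z0) / r ^ 3 * x0 * (x0 * h01 + x1 * h11)) +
                g0) +
            (x0 * g0 + x1 * g1) *
              ((((z1 * r - z0) / r ^ 2 - z2) * r ^ 2 - (z0 / r - z1) * (2 * r)) / (r ^ 2) ^ 2 *
                (r⁻¹ * x0))) *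
          x0) +
      (z1 * (z0 / r * h11 + (z1 * r - z0) / r ^ 3 * x1 * (x0 * h01 + x1 * h11)) +
          z2 * (r⁻¹ * x1) * g1 +
        ((z0 / r - z1) / r ^ 2 * (x0 * g0 + x1 * g1) +
          ((z0 / r - z1) / r ^ 2 *
                (x0 * (z0 / r * h10 + (z1 * r - z0) / r ^ 3 * x1 * (x0 * h00 + x1 * h10)) +
                  x1 * (z0 / r * h11 + (z1 * r - z0) / r ^ 3 * x1 * (x0 * h01 + x1 * h11)) +
                  g1) +
              (x0 * g0 + x1 * g1) *
                ((((z1 * r - z0) / r ^ 2 - z2) * r ^ 2 - (z0 / r - z1) * (2 * r)) / (r ^ 2) ^ 2 *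
                  (r⁻¹ * x1))) *
            x1)) =
      z0 * z1 / r * (h00 + h11) := by
  have hrne : r ≠ 0 := hr.ne'
  field_simp
  linear_combination (2 * r * z0 * z1 * x0 ^ 2 * h00 + 2 * r * z0 * z1 * x0 * x1 * h10 - z0 ^ 2 * x0 ^ 2 * h00 - z0 ^ 2 * x0 * x1 * h10 + 2 * r * z0 * z1 * x0 * x1 * h01 + 2 * r * z0 * z1 * x1 ^ 2 * h11 - z0 ^ 2 * x0 * x1 * h01 - z0 ^ 2 * x1 ^ 2 * h11 - r ^ 2 * z1 ^ 2 * x0 ^ 2 * h00 - r ^ 2 * z1 ^ 2 * x0 * x1 * h10 - r ^ 2 * z1 ^ 2 * x0 * x1 * h01 - r ^ 2 * z1 ^ 2 * x1 ^ 2 * h11 + 3 * r ^ 2 * z1 * x0 * g0 - 3 * r * z0 * x0 * g0 - r ^ 3 * z2 * x0 * g0 + 3 * r ^ 2 * z1 * x1 * g1 - 3 * r * z0 * x1 * g1 - r ^ 3 * z2 * x1 * g1) * hC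


set_option maxHeartbeats 2000000 in
lemma spatial (ζ : ℝ → ℝ) (hζ : ContDiff ℝ (⊤ : ℕ∞) ζ)
    (hζpos : ∀ r : ℝ, 0 < r → 0 < ζ r)
    (hζ'pos : ∀ r : ℝ, 0 < r → 0 < deriv ζ r)
    (Φ : E2 → E2) (hΦ : ∀ x, Φ x = (ζ ‖x‖ / ‖x‖) • x)
    (M : E2 → E2 → E2)
    (hM : ∀ y w, M y w = (ζ ‖y‖ / (‖y‖ * deriv ζ ‖y‖)) • radialProj y w +
      ((‖y‖ * deriv ζ ‖y‖) / ζ ‖y‖) • (w - radialProj y w))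
    (U : E2 → ℝ) (hU : ContDiff ℝ 2 U)
    (x : E2) (hx : x ≠ 0) :
    diverg (fun y => M y (gradient (fun z => U (Φ z)) y)) x
      = (ζ ‖x‖ * deriv ζ ‖x‖ / ‖x‖) * lap U (Φ x) := by
  have hr : (0:ℝ) < ‖x‖ := norm_pos_iff.2 hx
  -- smoothness of ζ and its derivatives
  have hζi : ContDiff ℝ (⊤ : ℕ∞) ζ := hζ.of_le (by simp)
  have hζ'i : ContDiff ℝ (⊤ : ℕ∞) (deriv ζ) := (contDiff_infty_iff_deriv.mp hζi).2
  have hζd : ∀ s : ℝ, HasDerivAt ζ (deriv ζ s) s :=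
    fun s => (hζi.differentiable (by simp) s).hasDerivAt
  have hζ'd : ∀ s : ℝ, HasDerivAt (deriv ζ) (deriv (deriv ζ) s) s :=
    fun s => (hζ'i.differentiable (by simp) s).hasDerivAt
  -- the gradient of U
  have hUdiff : Differentiable ℝ U := hU.differentiable two_ne_zero
  have hgc : ContDiff ℝ 1 (gradient U) := by
    unfold gradient
    exact (InnerProductSpace.toDual ℝ E2).symm.contDiff.comp
      (hU.fderiv_right (by norm_num))
  have hgdiff : Differentiable ℝ (gradient U) := hgc.differentiable one_ne_zero
  have inner_g : ∀ (y w : E2), ⟪gradient U y, w⟫ = fderiv ℝ U y w := by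
    intro y w
    exact InnerProductSpace.toDual_symm_apply
  -- derivative of the change of variables
  set A : E2 → (E2 →L[ℝ] E2) := fun z =>
    (ζ ‖z‖ / ‖z‖) • ContinuousLinearMap.id ℝ E2 +
      ((deriv ζ ‖z‖ * ‖z‖ - ζ ‖z‖) / ‖z‖ ^ 3) • ((innerSL ℝ z).smulRight z) with hA_def
  have hAapply : ∀ z w : E2, A z w = (ζ ‖z‖ / ‖z‖) • w +
      ((deriv ζ ‖z‖ * ‖z‖ - ζ ‖z‖) / ‖z‖ ^ 3 * ⟪z, w⟫) • z := by
    intro z w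
    simp [hA_def, ContinuousLinearMap.smul_apply, ContinuousLinearMap.smulRight_apply,
      smul_smul]
  have hA : ∀ z : E2, z ≠ 0 → HasFDerivAt Φ (A z) z := by
    intro z hz
    have hzr : (0:ℝ) < ‖z‖ := norm_pos_iff.2 hz
    have hΦf : Φ = fun w => (ζ ‖w‖ / ‖w‖) • w := funext hΦ
    rw [hΦf]
    have hdiv : HasDerivAt (fun s : ℝ => ζ s / s)
        ((deriv ζ ‖z‖ * ‖z‖ - ζ ‖z‖ * 1) / ‖z‖ ^ 2) ‖z‖ :=
      (hζd ‖z‖).div (hasDerivAt_id ‖z‖) hzr.ne'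
    have hcomp := hdiv.comp_hasFDerivAt z (hasFDerivAt_norm'' hz)
    have := hcomp.smul (hasFDerivAt_id z)
    refine this.congr_fderiv ?_
    ext w i
    simp only [hA_def, ContinuousLinearMap.add_apply, ContinuousLinearMap.smul_apply,
      ContinuousLinearMap.id_apply, ContinuousLinearMap.smulRight_apply, innerSL_apply_apply,
      PiLp.add_apply, PiLp.smul_apply, smul_eq_mul, Function.comp_apply, id_eq]
    field_simp
  have hgrad : ∀ z : E2, z ≠ 0 →
      HasFDerivAt (fun y => U (Φ y)) ((fderiv ℝ U (Φ z)).comp (A z)) z := by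
    intro z hz
    exact ((hUdiff (Φ z)).hasFDerivAt).comp z (hA z hz)
  have hgradeq : ∀ z : E2, z ≠ 0 →
      gradient (fun y => U (Φ y)) z = A z (gradient U (Φ z)) := by
    intro z hz
    show (InnerProductSpace.toDual ℝ E2).symm (fderiv ℝ (fun y => U (Φ y)) z)
      = A z (gradient U (Φ z))
    rw [(hgrad z hz).fderiv]
    apply ext_inner_right ℝ
    intro w
    rw [InnerProductSpace.toDual_symm_apply, ContinuousLinearMap.comp_apply, ← inner_g,
      hAapply, hAapply]
    simp only [inner_add_left, inner_add_right, real_inner_smul_left, real_inner_smul_right]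
    rw [real_inner_comm (gradient U (Φ z)) z]
    ring
  have hfield : ∀ z : E2, z ≠ 0 →
      M z (gradient (fun y => U (Φ y)) z) =
        deriv ζ ‖z‖ • gradient U (Φ z) +
          ((ζ ‖z‖ / ‖z‖ - deriv ζ ‖z‖) / ‖z‖ ^ 2 * ⟪z, gradient U (Φ z)⟫) • z := by
    intro z hz
    have hzr : (0:ℝ) < ‖z‖ := norm_pos_iff.2 hz
    have hζz : (0:ℝ) < ζ ‖z‖ := hζpos _ hzr
    have hζ'z : (0:ℝ) < deriv ζ ‖z‖ := hζ'pos _ hzr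
    rw [hgradeq z hz, hM, hAapply]
    unfold radialProj
    simp only [inner_add_left, real_inner_smul_left, real_inner_smul_right,
      real_inner_self_eq_norm_sq, real_inner_comm (gradient U (Φ z)) z]
    match_scalars
    all_goals field_simp
    all_goals ring
  -- derivative data at x
  have hy : Φ x ≠ 0 := by
    rw [hΦ x]
    intro h
    have h2 : (ζ ‖x‖ / ‖x‖) ≠ 0 := ne_of_gt (div_pos (hζpos _ hr) hr)
    exact hx (by simpa [smul_eq_zero, h2] using h)
  set y := Φ x with hy_def
  set H : E2 →L[ℝ] E2 := fderiv ℝ (gradient U) y with hH_def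
  have hGd : HasFDerivAt (fun z => gradient U (Φ z)) (H.comp (A x)) x :=
    ((hgdiff y).hasFDerivAt).comp x (hA x hx)
  have hqd : HasFDerivAt (fun z => ⟪z, gradient U (Φ z)⟫)
      ((fderivInnerCLM ℝ (x, gradient U y)).comp
        ((ContinuousLinearMap.id ℝ E2).prod (H.comp (A x)))) x :=
    (hasFDerivAt_id x).inner ℝ hGd
  have hNd : HasFDerivAt (fun z : E2 => ‖z‖) (‖x‖⁻¹ • innerSL ℝ x) x := hasFDerivAt_norm'' hx
  have hc1 := (hζ'd ‖x‖).comp_hasFDerivAt x hNd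
  have hbd := HasDerivAt.div (((hζd ‖x‖).div (hasDerivAt_id ‖x‖) hr.ne').sub (hζ'd ‖x‖))
      (hasDerivAt_pow 2 ‖x‖) (pow_ne_zero 2 hr.ne')
  have hcb := hbd.comp_hasFDerivAt x hNd
  have hqb := hcb.mul hqd
  have hterm2 := hqb.smul (hasFDerivAt_id x)
  have hterm1 := hc1.smul hGd
  have hFFd := hterm1.add hterm2
  simp only [Function.comp_def, id_eq, Pi.smul_def', Pi.add_def, Pi.mul_def, Pi.div_def,
    Pi.sub_def] at hFFd
  have hDeq : fderiv ℝ (fun z => M z (gradient (fun y' => U (Φ y')) z)) x =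
      fderiv ℝ (fun z =>
        deriv ζ ‖z‖ • gradient U (Φ z) +
          ((ζ ‖z‖ / ‖z‖ - deriv ζ ‖z‖) / ‖z‖ ^ 2 * ⟪z, gradient U (Φ z)⟫) • z) x := by
    apply Filter.EventuallyEq.fderiv_eq
    filter_upwards [isOpen_compl_singleton.mem_nhds (by simpa using hx : x ∈ ({0}ᶜ : Set E2))]
      with z hz
    exact hfield z (by simpa using hz)
  unfold lap diverg
  rw [hDeq, hFFd.fderiv, trace_eq_sum', trace_eq_sum']
  have hxdec : x = x 0 • EuclideanSpace.single 0 (1:ℝ) + x 1 • EuclideanSpace.single 1 (1:ℝ) := by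
    ext j
    fin_cases j <;> simp [EuclideanSpace.single_apply]
  have hHx : H x = x 0 • H (EuclideanSpace.single 0 1) + x 1 • H (EuclideanSpace.single 1 1) := by
    conv_lhs => rw [hxdec]
    simp only [map_add, map_smul]
  have hr2 : x 0 ^ 2 + x 1 ^ 2 = ‖x‖ ^ 2 := by
    rw [EuclideanSpace.norm_eq, Real.sq_sqrt (by positivity)]
    simp [Fin.sum_univ_two]
  simp only [ContinuousLinearMap.add_apply, ContinuousLinearMap.smul_apply,
    ContinuousLinearMap.comp_apply, ContinuousLinearMap.smulRight_apply,
    ContinuousLinearMap.id_apply, ContinuousLinearMap.prod_apply, fderivInnerCLM_apply,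
    innerSL_apply_apply, hAapply, map_add, map_smul, Fin.sum_univ_two]
  rw [hHx]
  simp only [PiLp.add_apply, PiLp.smul_apply, smul_eq_mul, PiLp.inner_apply,
    RCLike.inner_apply, conj_trivial, EuclideanSpace.single_apply, Fin.sum_univ_two]
  norm_num
  rw [← hy_def, ← hH_def]
  linear_combination keyid ‖x‖ (ζ ‖x‖) (deriv ζ ‖x‖) (deriv (deriv ζ) ‖x‖) (x 0) (x 1)
    (H (EuclideanSpace.single 0 1) 0) (H (EuclideanSpace.single 0 1) 1)
    (H (EuclideanSpace.single 1 1) 0) (H (EuclideanSpace.single 1 1) 1)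
    (gradient U y 0) (gradient U y 1) hr hr2

set_option maxHeartbeats 1000000 in
/-- d = 2: If `u` satisfies the acoustic wave equation
`(1/c²) ∂ₜ² u(y, t) − Δ_y u(y, t) = 0` for `t > 0`, then `v(x, t) = u(Φ(x), t)` satisfies
the transformed wave equation
`(β(r)/c²) ∂ₜ² v(x, t) − div(y ↦ M(y) ∇_y v(y, t))(x) = 0` for `x ≠ 0`, `t > 0`. -/
theorem stmt6 (c : ℝ) (hc : 0 < c)
    (ζ : ℝ → ℝ) (hζ : ContDiff ℝ (⊤ : ℕ∞) ζ)
    (hζpos : ∀ r : ℝ, 0 < r → 0 < ζ r)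
    (hζ'pos : ∀ r : ℝ, 0 < r → 0 < deriv ζ r)
    (Φ : EuclideanSpace ℝ (Fin 2) → EuclideanSpace ℝ (Fin 2))
    (hΦ : ∀ x, Φ x = (ζ ‖x‖ / ‖x‖) • x)
    (u : EuclideanSpace ℝ (Fin 2) → ℝ → ℝ)
    (hu : ContDiff ℝ 2 (fun p : EuclideanSpace ℝ (Fin 2) × ℝ => u p.1 p.2))
    (hwave : ∀ (y : EuclideanSpace ℝ (Fin 2)) (t : ℝ), 0 < t →
      (1 / c ^ 2) * deriv (deriv (u y)) t - lap (fun z => u z t) y = 0)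
    (v : EuclideanSpace ℝ (Fin 2) → ℝ → ℝ) (hv : ∀ x t, v x t = u (Φ x) t)
    (β : ℝ → ℝ) (hβ : ∀ r : ℝ, β r = ζ r * deriv ζ r / r)
    (M : EuclideanSpace ℝ (Fin 2) → EuclideanSpace ℝ (Fin 2) → EuclideanSpace ℝ (Fin 2))
    (hM : ∀ y w, M y w = (ζ ‖y‖ / (‖y‖ * deriv ζ ‖y‖)) • radialProj y w +
      ((‖y‖ * deriv ζ ‖y‖) / ζ ‖y‖) • (w - radialProj y w)) :
    ∀ (x : EuclideanSpace ℝ (Fin 2)), x ≠ 0 → ∀ t : ℝ, 0 < t →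
      (β ‖x‖ / c ^ 2) * deriv (deriv (v x)) t -
        diverg (fun y => M y (gradient (fun z => v z t) y)) x = 0 := by
  intro x hx t ht
  have hU : ContDiff ℝ 2 (fun z => u z t) :=
    hu.comp (contDiff_id.prodMk contDiff_const)
  have hdiv : diverg (fun y => M y (gradient (fun z => v z t) y)) x
      = (ζ ‖x‖ * deriv ζ ‖x‖ / ‖x‖) * lap (fun z => u z t) (Φ x) := by
    simp only [hv]
    exact spatial ζ hζ hζpos hζ'pos Φ hΦ M hM (fun z => u z t) hU x hx
  rw [hdiv, hβ, show v x = u (Φ x) from funext fun s => hv x s]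
  linear_combination (ζ ‖x‖ * deriv ζ ‖x‖ / ‖x‖) * hwave (Φ x) t ht

end
end

section
/- Let d = 3. Let u : ℝ³ → ℝ³ be a continuously differentiable vector field and set v = u ∘ Φ on ℝ³ \ {0}. Define β(r) = ζ(r)²ζ'(r)/r² and the matrix field K by K(y)w = (ζ(|y|)²/|y|²) P_y(w) + (ζ(|y|)ζ'(|y|)/|y|)(w − P_y(w)). Then for every x ∈ ℝ³ with x ≠ 0, writing r = |x|, the divergences satisfy (div u)(Φ(x)) = β(r)⁻¹ · div( y ↦ K(y) v(y) )(x). -/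
open scoped RealInnerProductSpace

noncomputable section

local notation "E3" => EuclideanSpace ℝ (Fin 3)

lemma stmt8_trace_eq_sum (T : E3 →L[ℝ] E3) :
    LinearMap.trace ℝ E3 (T : E3 →ₗ[ℝ] E3) = ∑ i, T (EuclideanSpace.single i 1) i := by
  rw [LinearMap.trace_eq_matrix_trace ℝ (EuclideanSpace.basisFun (Fin 3) ℝ).toBasis]
  simp [Matrix.trace, Matrix.diag, LinearMap.toMatrix_apply]

lemma stmt8_sum_coord_mul (p q : E3) : ∑ i, p i * q i = ⟪p, q⟫ := by
  simp [PiLp.inner_apply, RCLike.inner_apply, mul_comm]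

lemma stmt8_sum_repr (x : E3) : ∑ i, x i • EuclideanSpace.single i 1 = x := by
  have := (EuclideanSpace.basisFun (Fin 3) ℝ).toBasis.sum_repr x
  simpa [EuclideanSpace.basisFun_apply] using this

lemma stmt8_sum_inner_single (A : E3 →L[ℝ] E3) (x : E3) :
    ∑ i, x i * ⟪A (EuclideanSpace.single i 1), x⟫ = ⟪A x, x⟫ := by
  calc ∑ i, x i * ⟪A (EuclideanSpace.single i 1), x⟫
      = ⟪A (∑ i, x i • EuclideanSpace.single i 1), x⟫ := by
        simp [map_sum, sum_inner, real_inner_smul_left, Finset.mul_sum, mul_assoc]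
    _ = ⟪A x, x⟫ := by rw [stmt8_sum_repr]

lemma stmt8_hasFDerivAt_norm (x : E3) (hx : x ≠ 0) :
    HasFDerivAt (fun y : E3 => ‖y‖) (‖x‖⁻¹ • (innerSL ℝ x : E3 →L[ℝ] ℝ)) x := by
  have h1 : HasFDerivAt (fun y : E3 => ‖y‖ ^ 2)
      (2 • ((innerSL ℝ x).comp (ContinuousLinearMap.id ℝ E3))) x :=
    (hasFDerivAt_id x).norm_sq
  have h2 := h1.sqrt (pow_ne_zero 2 (norm_ne_zero_iff.mpr hx))
  have h3 : (fun y : E3 => Real.sqrt (‖y‖ ^ 2)) = fun y : E3 => ‖y‖ := by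
    funext y; rw [Real.sqrt_sq (norm_nonneg y)]
  rw [h3] at h2
  refine h2.congr_fderiv ?_
  ext w
  have hxn : ‖x‖ ≠ 0 := norm_ne_zero_iff.mpr hx
  simp [Real.sqrt_sq (norm_nonneg x)]
  field_simp

set_option maxHeartbeats 2000000 in
/-- d = 3: For the radial change of variables `Φ(x) = (ζ(|x|)/|x|) x`,
`v = u ∘ Φ`, `β(r) = ζ(r)²ζ'(r)/r²` and
`K(y)w = (ζ(|y|)²/|y|²) P_y(w) + (ζ(|y|)ζ'(|y|)/|y|)(w − P_y(w))`, the divergences satisfy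
`(div u)(Φ(x)) = β(r)⁻¹ · div(y ↦ K(y) v(y))(x)`, `r = |x|`. -/
theorem stmt8 (ζ : ℝ → ℝ) (hζ : ContDiff ℝ (⊤ : ℕ∞) ζ)
    (hζpos : ∀ r : ℝ, 0 < r → 0 < ζ r)
    (hζ'pos : ∀ r : ℝ, 0 < r → 0 < deriv ζ r)
    (Φ : EuclideanSpace ℝ (Fin 3) → EuclideanSpace ℝ (Fin 3))
    (hΦ : ∀ x, Φ x = (ζ ‖x‖ / ‖x‖) • x)
    (u : EuclideanSpace ℝ (Fin 3) → EuclideanSpace ℝ (Fin 3)) (hu : ContDiff ℝ 1 u)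
    (v : EuclideanSpace ℝ (Fin 3) → EuclideanSpace ℝ (Fin 3)) (hv : v = u ∘ Φ)
    (β : ℝ → ℝ) (hβ : ∀ r : ℝ, β r = ζ r ^ 2 * deriv ζ r / r ^ 2)
    (K : EuclideanSpace ℝ (Fin 3) → EuclideanSpace ℝ (Fin 3) → EuclideanSpace ℝ (Fin 3))
    (hK : ∀ y w, K y w = (ζ ‖y‖ ^ 2 / ‖y‖ ^ 2) • radialProj y w +
      (ζ ‖y‖ * deriv ζ ‖y‖ / ‖y‖) • (w - radialProj y w)) :
    ∀ x : EuclideanSpace ℝ (Fin 3), x ≠ 0 →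
      diverg u (Φ x) = (β ‖x‖)⁻¹ * diverg (fun y => K y (v y)) x := by
  intro x hx
  have hr : (0:ℝ) < ‖x‖ := norm_pos_iff.mpr hx
  have hζd : Differentiable ℝ ζ := hζ.differentiable (by simp)
  have hdζd : Differentiable ℝ (deriv ζ) :=
    ((hζ.of_le (by simp)).iterate_deriv 1).differentiable (by norm_num)
  have hζx : HasDerivAt ζ (deriv ζ ‖x‖) ‖x‖ := (hζd ‖x‖).hasDerivAt
  have hdζx : HasDerivAt (deriv ζ) (deriv (deriv ζ) ‖x‖) ‖x‖ := (hdζd ‖x‖).hasDerivAt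
  have hb : HasDerivAt (fun s => ζ s * deriv ζ s / s) _ ‖x‖ :=
    (hζx.mul hdζx).div (hasDerivAt_id ‖x‖) hr.ne'
  have hc : HasDerivAt (fun s => ζ s * ζ s / (s*s*s*s) - ζ s * deriv ζ s / (s*s*s)) _ ‖x‖ :=
    (((hζx.mul hζx).div ((((hasDerivAt_id ‖x‖).mul (hasDerivAt_id ‖x‖)).mul
      (hasDerivAt_id ‖x‖)).mul (hasDerivAt_id ‖x‖)) (by simp [hx])).sub
      ((hζx.mul hdζx).div (((hasDerivAt_id ‖x‖).mul (hasDerivAt_id ‖x‖)).mul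
      (hasDerivAt_id ‖x‖)) (by simp [hx])))
  have hg : HasDerivAt (fun s => ζ s / s) _ ‖x‖ := hζx.div (hasDerivAt_id ‖x‖) hr.ne'
  have hN : HasFDerivAt (fun y : E3 => ‖y‖) (‖x‖⁻¹ • (innerSL ℝ x : E3 →L[ℝ] ℝ)) x :=
    stmt8_hasFDerivAt_norm x hx
  have hΦf : HasFDerivAt Φ ((ζ ‖x‖ / ‖x‖) • ContinuousLinearMap.id ℝ E3 +
      (((deriv ζ ‖x‖ * ‖x‖ - ζ ‖x‖ * 1) / ‖x‖ ^ 2) •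
        (‖x‖⁻¹ • (innerSL ℝ x : E3 →L[ℝ] ℝ))).smulRight x) x := by
    have h1 : HasFDerivAt (fun y : E3 => ζ ‖y‖ / ‖y‖)
        (((deriv ζ ‖x‖ * ‖x‖ - ζ ‖x‖ * 1) / ‖x‖ ^ 2) •
          (‖x‖⁻¹ • (innerSL ℝ x : E3 →L[ℝ] ℝ))) x :=
      hg.comp_hasFDerivAt x hN
    have h2 := h1.smul (hasFDerivAt_id x)
    have h3 : (fun y : E3 => (ζ ‖y‖ / ‖y‖) • y) = Φ := by funext y; rw [hΦ]
    rw [← h3]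
    simp at h2 ⊢; exact h2
  have hA : HasFDerivAt u (fderiv ℝ u (Φ x)) (Φ x) := (hu.differentiable (by norm_num) (Φ x)).hasFDerivAt
  have hDv : HasFDerivAt v ((fderiv ℝ u (Φ x)).comp
      ((ζ ‖x‖ / ‖x‖) • ContinuousLinearMap.id ℝ E3 +
      (((deriv ζ ‖x‖ * ‖x‖ - ζ ‖x‖ * 1) / ‖x‖ ^ 2) •
        (‖x‖⁻¹ • (innerSL ℝ x : E3 →L[ℝ] ℝ))).smulRight x)) x := by
    rw [hv]; exact hA.comp x hΦf
  have hbN := hb.comp_hasFDerivAt x hN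
  have hcN := hc.comp_hasFDerivAt x hN
  have hinner := hDv.inner ℝ (hasFDerivAt_id x)
  have hG := (hbN.smul hDv).add ((hcN.mul hinner).smul (hasFDerivAt_id x))
  have hKV := hG.congr_of_eventuallyEq (by
    filter_upwards [IsOpen.mem_nhds isOpen_compl_singleton hx] with y hy
    have hny : ‖y‖ ≠ 0 := norm_ne_zero_iff.mpr hy
    show K y (v y) = _
    simp only [Function.comp_apply, ContinuousLinearMap.id_apply, id_eq, Pi.mul_apply,
      Pi.add_apply, Pi.smul_apply']
    rw [hK, radialProj]
    rw [real_inner_smul_right]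
    match_scalars <;> field_simp <;> ring)
  have key : LinearMap.trace ℝ E3 (fderiv ℝ (fun y => K y (v y)) x : E3 →ₗ[ℝ] E3) =
      (ζ ‖x‖ * ζ ‖x‖ * deriv ζ ‖x‖ / (‖x‖ * ‖x‖)) *
        LinearMap.trace ℝ E3 (fderiv ℝ u (Φ x) : E3 →ₗ[ℝ] E3) := by
    rw [hKV.fderiv, stmt8_trace_eq_sum]
    simp only [ContinuousLinearMap.add_apply, ContinuousLinearMap.coe_smul', Pi.smul_apply,
      ContinuousLinearMap.smulRight_apply, ContinuousLinearMap.comp_apply,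
      ContinuousLinearMap.id_apply, ContinuousLinearMap.prod_apply, fderivInnerCLM_apply,
      innerSL_apply_apply, smul_eq_mul, map_add, ContinuousLinearMap.map_smul, PiLp.add_apply,
      PiLp.smul_apply, Function.comp_apply, id_eq, real_inner_smul_left, real_inner_smul_right,
      inner_add_left, inner_add_right, EuclideanSpace.inner_single_right, conj_trivial,
      EuclideanSpace.single_apply, if_true, Pi.mul_apply]
    trans ∑ i : Fin 3,
      ((ζ ‖x‖ * deriv ζ ‖x‖ / ‖x‖ * (ζ ‖x‖ / ‖x‖)) *
          ((fderiv ℝ u (Φ x)) (EuclideanSpace.single i 1) i)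
        + (ζ ‖x‖ * deriv ζ ‖x‖ / ‖x‖ * ((deriv ζ ‖x‖ * ‖x‖ - ζ ‖x‖ * 1) / ‖x‖ ^ 2) / ‖x‖) *
          (x i * (fderiv ℝ u (Φ x)) x i)
        + ((((deriv ζ ‖x‖ * deriv ζ ‖x‖ + ζ ‖x‖ * deriv (deriv ζ) ‖x‖) * ‖x‖ -
              ζ ‖x‖ * deriv ζ ‖x‖ * 1) / ‖x‖ ^ 2) / ‖x‖ +
            (ζ ‖x‖ * ζ ‖x‖ / (‖x‖ * ‖x‖ * ‖x‖ * ‖x‖) - ζ ‖x‖ * deriv ζ ‖x‖ / (‖x‖ * ‖x‖ * ‖x‖))) *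
          (x i * v x i)
        + ((ζ ‖x‖ * ζ ‖x‖ / (‖x‖ * ‖x‖ * ‖x‖ * ‖x‖) - ζ ‖x‖ * deriv ζ ‖x‖ / (‖x‖ * ‖x‖ * ‖x‖)) *
            (ζ ‖x‖ / ‖x‖)) *
          (x i * ⟪(fderiv ℝ u (Φ x)) (EuclideanSpace.single i 1), x⟫)
        + ((ζ ‖x‖ * ζ ‖x‖ / (‖x‖ * ‖x‖ * ‖x‖ * ‖x‖) - ζ ‖x‖ * deriv ζ ‖x‖ / (‖x‖ * ‖x‖ * ‖x‖)) *
            ((deriv ζ ‖x‖ * ‖x‖ - ζ ‖x‖ * 1) / ‖x‖ ^ 2) / ‖x‖ * ⟪(fderiv ℝ u (Φ x)) x, x⟫ +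
           ⟪v x, x⟫ *
            ((((deriv ζ ‖x‖ * ζ ‖x‖ + ζ ‖x‖ * deriv ζ ‖x‖) * (‖x‖ * ‖x‖ * ‖x‖ * ‖x‖) -
                 ζ ‖x‖ * ζ ‖x‖ * (((1 * ‖x‖ + ‖x‖ * 1) * ‖x‖ + ‖x‖ * ‖x‖ * 1) * ‖x‖ +
                   ‖x‖ * ‖x‖ * ‖x‖ * 1)) / (‖x‖ * ‖x‖ * ‖x‖ * ‖x‖) ^ 2 -
               ((deriv ζ ‖x‖ * deriv ζ ‖x‖ + ζ ‖x‖ * deriv (deriv ζ) ‖x‖) * (‖x‖ * ‖x‖ * ‖x‖) -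
                 ζ ‖x‖ * deriv ζ ‖x‖ * ((1 * ‖x‖ + ‖x‖ * 1) * ‖x‖ + ‖x‖ * ‖x‖ * 1)) /
                 (‖x‖ * ‖x‖ * ‖x‖) ^ 2) / ‖x‖)) *
          (x i * x i)
        + (ζ ‖x‖ * ζ ‖x‖ / (‖x‖ * ‖x‖ * ‖x‖ * ‖x‖) - ζ ‖x‖ * deriv ζ ‖x‖ / (‖x‖ * ‖x‖ * ‖x‖)) *
          ⟪v x, x⟫)
    · exact Finset.sum_congr rfl fun i _ => by ring
    rw [Finset.sum_add_distrib, Finset.sum_add_distrib, Finset.sum_add_distrib,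
      Finset.sum_add_distrib, Finset.sum_add_distrib]
    rw [← Finset.mul_sum, ← Finset.mul_sum, ← Finset.mul_sum, ← Finset.mul_sum, ← Finset.mul_sum,
      Finset.sum_const, Finset.card_univ]
    rw [← stmt8_trace_eq_sum, stmt8_sum_coord_mul x ((fderiv ℝ u (Φ x)) x),
      stmt8_sum_coord_mul x (v x), stmt8_sum_inner_single, stmt8_sum_coord_mul x x]
    rw [real_inner_comm x ((fderiv ℝ u (Φ x)) x), real_inner_comm x (v x),
      real_inner_self_eq_norm_mul_norm]
    simp only [Fintype.card_fin, nsmul_eq_mul, Nat.cast_ofNat]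
    field_simp
    ring
  have hβpos : 0 < β ‖x‖ := by
    rw [hβ]
    have := hζpos ‖x‖ hr
    have := hζ'pos ‖x‖ hr
    positivity
  have hdiv : diverg (fun y => K y (v y)) x =
      (ζ ‖x‖ * ζ ‖x‖ * deriv ζ ‖x‖ / (‖x‖ * ‖x‖)) * diverg u (Φ x) := key
  rw [hdiv, hβ]
  have hζx0 : ζ ‖x‖ ≠ 0 := (hζpos ‖x‖ hr).ne'
  have hζ'x0 : deriv ζ ‖x‖ ≠ 0 := (hζ'pos ‖x‖ hr).ne'
  field_simp

end
end

section
/- Let d = 3. Let u : ℝ³ → ℝ be twice continuously differentiable and set v = u ∘ Φ on ℝ³ \ {0}. Define β(r) = ζ(r)²ζ'(r)/r² and the matrix field M by M(y)w = (ζ(|y|)²/(|y|² ζ'(|y|))) P_y(w) + ζ'(|y|)(w − P_y(w)). Then for every x ∈ ℝ³ with x ≠ 0, writing r = |x|, the Laplacian of u satisfies (Δu)(Φ(x)) = β(r)⁻¹ · div( y ↦ M(y) ∇v(y) )(x). -/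
open scoped RealInnerProductSpace

noncomputable section

/- ## Auxiliary lemmas -/

section Aux

variable {E : Type*} [NormedAddCommGroup E] [InnerProductSpace ℝ E]

lemma trace_onb {ι : Type*} [Fintype ι] (b : OrthonormalBasis ι ℝ E) (f : E →ₗ[ℝ] E) :
    LinearMap.trace ℝ E f = ∑ i, ⟪f (b i), b i⟫ := by
  classical
  rw [LinearMap.trace_eq_matrix_trace ℝ b.toBasis, Matrix.trace]
  congr 1
  ext i
  rw [Matrix.diag_apply, LinearMap.toMatrix_apply, b.coe_toBasis, b.coe_toBasis_repr_apply,
    b.repr_apply_apply, real_inner_comm]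

lemma trace_smulRight [FiniteDimensional ℝ E] (φ : E →L[ℝ] ℝ) (w : E) :
    LinearMap.trace ℝ E ((φ.smulRight w : E →L[ℝ] E) : E →ₗ[ℝ] E) = φ w := by
  classical
  set b := stdOrthonormalBasis ℝ E
  rw [trace_onb b]
  have hw : w = ∑ i, ⟪b i, w⟫ • b i := by
    simpa [b.repr_apply_apply] using (b.sum_repr' w).symm
  calc ∑ i, ⟪(φ.smulRight w : E →L[ℝ] E) (b i), b i⟫
      = ∑ i, φ (b i) * ⟪w, b i⟫ := by
        simp [ContinuousLinearMap.smulRight_apply, real_inner_smul_left]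
    _ = φ w := by
        conv_rhs => rw [hw]
        rw [map_sum]
        simp [real_inner_comm, mul_comm]

lemma hasFDerivAt_norm' {y : E} (hy : y ≠ 0) :
    HasFDerivAt (fun t : E => ‖t‖) (‖y‖⁻¹ • innerSL ℝ y) y := by
  have hyn : (0:ℝ) < ‖y‖ := norm_pos_iff.mpr hy
  have hinner : HasFDerivAt (fun t : E => ⟪t, t⟫)
      ((fderivInnerCLM ℝ (y, y)).comp ((ContinuousLinearMap.id ℝ E).prod
        (ContinuousLinearMap.id ℝ E))) y :=
    (hasFDerivAt_id y).inner ℝ (hasFDerivAt_id y)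
  have hs : ⟪y, y⟫ ≠ 0 := by
    rw [real_inner_self_eq_norm_sq]; positivity
  have hsq := HasDerivAt.comp_hasFDerivAt (f := fun t : E => ⟪t, t⟫) y
    (Real.hasDerivAt_sqrt hs) hinner
  have hfun : (fun t : E => Real.sqrt ⟪t, t⟫) = fun t : E => ‖t‖ := by
    funext t
    rw [real_inner_self_eq_norm_sq, Real.sqrt_sq (norm_nonneg t)]
  have hsq' : HasFDerivAt (fun t : E => ‖t‖)
      ((1 / (2 * Real.sqrt ⟪y, y⟫)) • (fderivInnerCLM ℝ (y, y)).comp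
        ((ContinuousLinearMap.id ℝ E).prod (ContinuousLinearMap.id ℝ E))) y := by
    rw [← hfun]; exact hsq
  refine hsq'.congr_fderiv (Eq.symm ?_)
  ext w
  rw [real_inner_self_eq_norm_sq, Real.sqrt_sq (norm_nonneg y)]
  simp [fderivInnerCLM_apply, real_inner_comm]
  field_simp
  ring

/-- `⟪∇f(y), w⟫ = (Df)(y)(w)`. -/
lemma inner_gradient [CompleteSpace E] (f : E → ℝ) (y w : E) :
    ⟪gradient f y, w⟫ = fderiv ℝ f y w := by
  rw [gradient, ← InnerProductSpace.toDual_apply_apply, LinearIsometryEquiv.apply_symm_apply]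

end Aux

/- ## The radial change of variables -/

abbrev E3 := EuclideanSpace ℝ (Fin 3)

/-- The derivative of `Φ` at `y`. -/
def DF (ζ : ℝ → ℝ) (y : E3) : E3 →L[ℝ] E3 :=
  (ζ ‖y‖ / ‖y‖) • ContinuousLinearMap.id ℝ E3 +
    (((deriv ζ ‖y‖ * ‖y‖ - ζ ‖y‖ * 1) / ‖y‖ ^ 2) • (‖y‖⁻¹ • innerSL ℝ y)).smulRight y

lemma DF_apply (ζ : ℝ → ℝ) (y w : E3) :
    DF ζ y w = (ζ ‖y‖ / ‖y‖) • w +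
      ((deriv ζ ‖y‖ * ‖y‖ - ζ ‖y‖ * 1) / ‖y‖ ^ 2 * (‖y‖⁻¹ * ⟪y, w⟫)) • y := by
  simp only [DF, ContinuousLinearMap.add_apply, ContinuousLinearMap.smul_apply,
    ContinuousLinearMap.smulRight_apply, ContinuousLinearMap.id_apply,
    innerSL_apply_apply, smul_eq_mul]

lemma hasFDerivAt_Phi (ζ : ℝ → ℝ) (hζ : ContDiff ℝ (⊤ : ℕ∞) ζ)
    (Φ : E3 → E3) (hΦ : ∀ x, Φ x = (ζ ‖x‖ / ‖x‖) • x) {y : E3} (hy : y ≠ 0) :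
    HasFDerivAt Φ (DF ζ y) y := by
  have hyn : (0:ℝ) < ‖y‖ := norm_pos_iff.mpr hy
  rw [show Φ = fun x : E3 => (ζ ‖x‖ / ‖x‖) • x from funext hΦ]
  have hz : HasDerivAt ζ (deriv ζ ‖y‖) ‖y‖ := ((hζ.differentiable (by simp)) ‖y‖).hasDerivAt
  have hS : HasDerivAt (fun t : ℝ => ζ t / t)
      ((deriv ζ ‖y‖ * ‖y‖ - ζ ‖y‖ * 1) / ‖y‖ ^ 2) ‖y‖ :=
    hz.div (hasDerivAt_id ‖y‖) hyn.ne'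
  have hn := hasFDerivAt_norm' hy
  have hSF : HasFDerivAt (fun x : E3 => ζ ‖x‖ / ‖x‖)
      (((deriv ζ ‖y‖ * ‖y‖ - ζ ‖y‖ * 1) / ‖y‖ ^ 2) • (‖y‖⁻¹ • innerSL ℝ y)) y :=
    HasDerivAt.comp_hasFDerivAt (f := fun t : E3 => ‖t‖) y hS hn
  exact hSF.smul (hasFDerivAt_id y)

/-- The gradient of `v = u ∘ Φ`. -/
lemma gradient_comp (ζ : ℝ → ℝ) (hζ : ContDiff ℝ (⊤ : ℕ∞) ζ)
    (Φ : E3 → E3) (hΦ : ∀ x, Φ x = (ζ ‖x‖ / ‖x‖) • x)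
    (u : E3 → ℝ) (hu : Differentiable ℝ u) {y : E3} (hy : y ≠ 0) :
    gradient (u ∘ Φ) y =
      ((deriv ζ ‖y‖ * ‖y‖ - ζ ‖y‖) / ‖y‖ ^ 3 * ⟪gradient u (Φ y), y⟫) • y +
        (ζ ‖y‖ / ‖y‖) • gradient u (Φ y) := by
  have hyn : (0:ℝ) < ‖y‖ := norm_pos_iff.mpr hy
  have hΦy := hasFDerivAt_Phi ζ hζ Φ hΦ hy
  have hvy : HasFDerivAt (u ∘ Φ) ((fderiv ℝ u (Φ y)).comp (DF ζ y)) y :=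
    (hu (Φ y)).hasFDerivAt.comp y hΦy
  apply ext_inner_right ℝ
  intro w
  rw [inner_gradient, hvy.fderiv, ContinuousLinearMap.comp_apply,
    ← inner_gradient u (Φ y), DF_apply]
  simp only [inner_add_left, inner_add_right, real_inner_smul_left, real_inner_smul_right]
  field_simp
  ring

/-- The flux field `M ∇v` in divergence form. -/
lemma M_grad_eq (ζ : ℝ → ℝ) (hζ : ContDiff ℝ (⊤ : ℕ∞) ζ)
    (Φ : E3 → E3) (hΦ : ∀ x, Φ x = (ζ ‖x‖ / ‖x‖) • x)
    (u : E3 → ℝ) (hu : Differentiable ℝ u)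
    (M : E3 → E3 → E3)
    (hM : ∀ y w, M y w = (ζ ‖y‖ ^ 2 / (‖y‖ ^ 2 * deriv ζ ‖y‖)) • radialProj y w +
      deriv ζ ‖y‖ • (w - radialProj y w))
    {y : E3} (hy : y ≠ 0) (hz' : 0 < deriv ζ ‖y‖) :
    M y (gradient (u ∘ Φ) y) =
      ((ζ ‖y‖ ^ 2 / ‖y‖ ^ 4 - ζ ‖y‖ * deriv ζ ‖y‖ / ‖y‖ ^ 3) * ⟪gradient u (Φ y), y⟫) • y +
        (ζ ‖y‖ * deriv ζ ‖y‖ / ‖y‖) • gradient u (Φ y) := by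
  have hyn : (0:ℝ) < ‖y‖ := norm_pos_iff.mpr hy
  rw [hM, gradient_comp ζ hζ Φ hΦ u hu hy]
  simp only [radialProj, inner_add_left, real_inner_smul_left, real_inner_smul_right,
    real_inner_self_eq_norm_sq, smul_smul, smul_sub, smul_add, sub_smul, add_smul]
  match_scalars
  · field_simp
    ring
  · field_simp

/-- d = 3: For the radial change of variables `Φ(x) = (ζ(|x|)/|x|) x`,
`v = u ∘ Φ`, `β(r) = ζ(r)²ζ'(r)/r²` and
`M(y)w = (ζ(|y|)²/(|y|²ζ'(|y|))) P_y(w) + ζ'(|y|)(w − P_y(w))`, the Laplacian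
satisfies `(Δu)(Φ(x)) = β(r)⁻¹ · div(y ↦ M(y) ∇v(y))(x)`, `r = |x|`. -/
theorem stmt9 (ζ : ℝ → ℝ) (hζ : ContDiff ℝ (⊤ : ℕ∞) ζ)
    (hζpos : ∀ r : ℝ, 0 < r → 0 < ζ r)
    (hζ'pos : ∀ r : ℝ, 0 < r → 0 < deriv ζ r)
    (Φ : EuclideanSpace ℝ (Fin 3) → EuclideanSpace ℝ (Fin 3))
    (hΦ : ∀ x, Φ x = (ζ ‖x‖ / ‖x‖) • x)
    (u : EuclideanSpace ℝ (Fin 3) → ℝ) (hu : ContDiff ℝ 2 u)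
    (v : EuclideanSpace ℝ (Fin 3) → ℝ) (hv : v = u ∘ Φ)
    (β : ℝ → ℝ) (hβ : ∀ r : ℝ, β r = ζ r ^ 2 * deriv ζ r / r ^ 2)
    (M : EuclideanSpace ℝ (Fin 3) → EuclideanSpace ℝ (Fin 3) → EuclideanSpace ℝ (Fin 3))
    (hM : ∀ y w, M y w = (ζ ‖y‖ ^ 2 / (‖y‖ ^ 2 * deriv ζ ‖y‖)) • radialProj y w +
      deriv ζ ‖y‖ • (w - radialProj y w)) :
    ∀ x : EuclideanSpace ℝ (Fin 3), x ≠ 0 →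
      lap u (Φ x) = (β ‖x‖)⁻¹ * diverg (fun y => M y (gradient v y)) x := by
  subst hv
  intro x hx
  have hr : (0:ℝ) < ‖x‖ := norm_pos_iff.mpr hx
  have hz0 : 0 < ζ ‖x‖ := hζpos _ hr
  have hz'0 : 0 < deriv ζ ‖x‖ := hζ'pos _ hr
  -- differentiability facts
  have hu1 : Differentiable ℝ u := hu.differentiable two_ne_zero
  have hgradC : ContDiff ℝ 1 (gradient u) := by
    have h1 : ContDiff ℝ 1 (fderiv ℝ u) := hu.fderiv_right (by norm_num)
    exact ((InnerProductSpace.toDual ℝ E3).symm.contDiff).comp h1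
  have hgd : Differentiable ℝ (gradient u) := hgradC.differentiable one_ne_zero
  have hΦx := hasFDerivAt_Phi ζ hζ Φ hΦ hx
  have hH : HasFDerivAt (gradient u) (fderiv ℝ (gradient u) (Φ x)) (Φ x) :=
    (hgd (Φ x)).hasFDerivAt
  have hgc : HasFDerivAt (fun y : E3 => gradient u (Φ y))
      ((fderiv ℝ (gradient u) (Φ x)).comp (DF ζ x)) x := hH.comp x hΦx
  -- scalar derivative facts at r = ‖x‖
  have hz : HasDerivAt ζ (deriv ζ ‖x‖) ‖x‖ := ((hζ.differentiable (by simp)) _).hasDerivAt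
  have hdζC := (contDiff_infty_iff_deriv.mp (hζ.of_le (by simp))).2
  have hz' : HasDerivAt (deriv ζ) (deriv (deriv ζ) ‖x‖) ‖x‖ :=
    ((hdζC.differentiable (by simp)) _).hasDerivAt
  have hα1 := (hz.pow 2).div (hasDerivAt_pow 4 ‖x‖) (by positivity)
  have hα2 := (hz.mul hz').div (hasDerivAt_pow 3 ‖x‖) (by positivity)
  have hα := hα1.sub hα2
  have hγ := (hz.mul hz').div (hasDerivAt_id ‖x‖) hr.ne'
  have hn := hasFDerivAt_norm' hx
  have hαn := HasDerivAt.comp_hasFDerivAt (f := fun t : E3 => ‖t‖) x hα hn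
  have hγn := HasDerivAt.comp_hasFDerivAt (f := fun t : E3 => ‖t‖) x hγ hn
  have hinnerd := hgc.inner ℝ (hasFDerivAt_id x)
  have hA := hαn.mul hinnerd
  have h1 := hA.smul (hasFDerivAt_id x)
  have h2 := hγn.smul hgc
  have hG := h1.add h2
  have hG' : HasFDerivAt (fun y : E3 =>
      ((ζ ‖y‖ ^ 2 / ‖y‖ ^ 4 - ζ ‖y‖ * deriv ζ ‖y‖ / ‖y‖ ^ 3) * ⟪gradient u (Φ y), y⟫) • y +
        (ζ ‖y‖ * deriv ζ ‖y‖ / ‖y‖) • gradient u (Φ y)) _ x := hG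
  -- the flux field agrees with the divergence-form field near x
  have hevq : (fun y => M y (gradient (u ∘ Φ) y)) =ᶠ[nhds x] (fun y : E3 =>
      ((ζ ‖y‖ ^ 2 / ‖y‖ ^ 4 - ζ ‖y‖ * deriv ζ ‖y‖ / ‖y‖ ^ 3) * ⟪gradient u (Φ y), y⟫) • y +
        (ζ ‖y‖ * deriv ζ ‖y‖ / ‖y‖) • gradient u (Φ y)) := by
    filter_upwards [eventually_ne_nhds hx] with y hy
    exact M_grad_eq ζ hζ Φ hΦ u hu1 M hM hy (hζ'pos _ (norm_pos_iff.mpr hy))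
  -- compute the composite jacobian
  have hcomp : (fderiv ℝ (gradient u) (Φ x)).comp (DF ζ x) =
      (ζ ‖x‖ / ‖x‖) • (fderiv ℝ (gradient u) (Φ x)) +
        (((deriv ζ ‖x‖ * ‖x‖ - ζ ‖x‖ * 1) / ‖x‖ ^ 2) •
          (‖x‖⁻¹ • innerSL ℝ x)).smulRight ((fderiv ℝ (gradient u) (Φ x)) x) := by
    ext w
    simp only [ContinuousLinearMap.comp_apply, DF_apply, map_add, map_smul,
      ContinuousLinearMap.add_apply, ContinuousLinearMap.smul_apply,
      ContinuousLinearMap.smulRight_apply, innerSL_apply_apply, smul_eq_mul]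
  simp only [lap, diverg]
  rw [hevq.fderiv_eq, hG'.fderiv, hcomp]
  simp only [ContinuousLinearMap.coe_add, ContinuousLinearMap.coe_smul, map_add, map_smul,
    trace_smulRight, ContinuousLinearMap.coe_id, LinearMap.trace_id,
    finrank_euclideanSpace_fin, ContinuousLinearMap.add_apply, ContinuousLinearMap.smul_apply,
    ContinuousLinearMap.comp_apply, ContinuousLinearMap.smulRight_apply,
    ContinuousLinearMap.prod_apply, ContinuousLinearMap.id_apply, ContinuousLinearMap.coe_prod,
    fderivInnerCLM_apply, innerSL_apply_apply, smul_eq_mul, DF_apply, map_add, map_smul,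
    inner_add_left, inner_add_right, real_inner_smul_left, real_inner_smul_right,
    real_inner_self_eq_norm_sq, Function.comp, id_eq, Pi.div_apply, Pi.mul_apply, Pi.sub_apply,
    Pi.pow_apply, Function.comp_apply, id]
  rw [hβ]
  rw [real_inner_comm x (gradient u (Φ x)),
    real_inner_comm x ((fderiv ℝ (gradient u) (Φ x)) x)]
  push_cast
  field_simp
  ring

end
end

section
/- Let d = 2 and 0 < a < b < R, and let ζ be the compressed coordinate transformation. Define β : [0, b] → ℝ by β(0) = 1 and β(r) = ζ(r)ζ'(r)/r for r ∈ (0, b], and define the matrix field M on the closed ball {x ∈ ℝ² : |x| ≤ b} by M(x) = I for |x| ≤ a and M(x)w = (ζ(r)/(r ζ'(r))) P_x(w) + (r ζ'(r)/ζ(r))(w − P_x(w)) for a < |x| ≤ b, where r = |x|. Then β is continuous and strictly positive on [0, b], and for every x with |x| ≤ b, M(x) is a symmetric positive definite linear map, and x ↦ M(x) is continuous on the closed ball of radius b. -/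
/-!
On `(0, a]` the profile `ζ` is the identity. On `[a, b]` it is the Möbius map `η`, whose
denominator `D(r) = (b - r)(R - b) + (b - a)²` is positive for `r ≤ b`, with
`η' = ((b - a)(R - a))² / D²`, `η(a) = a` and `η'(a) = 1`. Hence `ζ` is `C¹` with `ζ > 0` and
`ζ' > 0` on `(0, b]`, so `β = ζ ζ' / r` is continuous and positive there, and `β ≡ 1` near `0`.

For `x ≠ 0`, `M(x)` scales the radial direction by `t = ζ/(r ζ')` and its orthogonal complement
by `t⁻¹`, with `t = 1` when `|x| ≤ a`. Such a map is symmetric, and positive definite as `t > 0`;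
it depends continuously on `x ≠ 0` because `t` and `e_r` do, and `M ≡ I` near `0`.
-/

open scoped RealInnerProductSpace

noncomputable section

open Set InnerProductSpace

section RadialScaling

variable {E : Type*} [NormedAddCommGroup E] [InnerProductSpace ℝ E]

lemma radialProj_eq_rankOne (x w : E) :
    radialProj x w = rankOne ℝ (‖x‖⁻¹ • x) (‖x‖⁻¹ • x) w := by
  rw [radialProj, rankOne_apply, real_inner_comm]

lemma inner_radialProj_left (x w z : E) :
    ⟪radialProj x w, z⟫ = ⟪w, ‖x‖⁻¹ • x⟫ * ⟪‖x‖⁻¹ • x, z⟫ := by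
  rw [radialProj, real_inner_smul_left]

lemma inner_radialProj_comm (x w z : E) : ⟪radialProj x w, z⟫ = ⟪w, radialProj x z⟫ := by
  simp only [radialProj]
  generalize ‖x‖⁻¹ • x = e
  rw [real_inner_smul_left, real_inner_smul_right, real_inner_comm e z, mul_comm]

lemma inner_radialProj_self_le (x w : E) : ⟪radialProj x w, w⟫ ≤ ‖w‖ ^ 2 := by
  have hunit : ‖‖x‖⁻¹ • x‖ ≤ 1 := by
    rw [norm_smul, norm_inv, norm_norm]
    exact inv_mul_le_one
  rw [inner_radialProj_left, real_inner_comm w, ← sq]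
  calc ⟪w, ‖x‖⁻¹ • x⟫ ^ 2 = |⟪w, ‖x‖⁻¹ • x⟫| ^ 2 := (sq_abs _).symm
    _ ≤ (‖w‖ * ‖‖x‖⁻¹ • x‖) ^ 2 := by
        gcongr
        exact abs_real_inner_le_norm _ _
    _ ≤ ‖w‖ ^ 2 := by
        gcongr
        exact mul_le_of_le_one_right (norm_nonneg w) hunit

lemma inner_radialProj_self_nonneg (x w : E) : 0 ≤ ⟪radialProj x w, w⟫ := by
  rw [inner_radialProj_left, real_inner_comm w]
  exact mul_self_nonneg _

def radialScaling (x : E) (t : ℝ) : E →L[ℝ] E :=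
  t • rankOne ℝ (‖x‖⁻¹ • x) (‖x‖⁻¹ • x) +
    t⁻¹ • (ContinuousLinearMap.id ℝ E - rankOne ℝ (‖x‖⁻¹ • x) (‖x‖⁻¹ • x))

lemma radialScaling_apply (x : E) (t : ℝ) (w : E) :
    radialScaling x t w = t • radialProj x w + t⁻¹ • (w - radialProj x w) := by
  simp [radialScaling, radialProj_eq_rankOne]

@[simp] lemma radialScaling_one (x : E) : radialScaling x 1 = ContinuousLinearMap.id ℝ E := by
  ext w; simp [radialScaling_apply]

lemma inner_radialScaling_comm (x : E) (t : ℝ) (w z : E) :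
    ⟪radialScaling x t w, z⟫ = ⟪w, radialScaling x t z⟫ := by
  simp only [radialScaling_apply, inner_add_left, inner_add_right, inner_sub_left,
    inner_sub_right, real_inner_smul_left, real_inner_smul_right, inner_radialProj_comm x w z,
    real_inner_comm z w]

lemma inner_radialScaling_self_pos (x : E) {t : ℝ} (ht : 0 < t) {w : E} (hw : w ≠ 0) :
    0 < ⟪radialScaling x t w, w⟫ := by
  have hp := inner_radialProj_self_nonneg x w
  have hpw := inner_radialProj_self_le x w
  have hw' : 0 < ‖w‖ := norm_pos_iff.2 hw
  rw [radialScaling_apply, inner_add_left, real_inner_smul_left, real_inner_smul_left,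
    inner_sub_left, real_inner_self_eq_norm_sq]
  rcases hp.eq_or_lt with h | h
  · rw [← h, mul_zero, zero_add, sub_zero]
    positivity
  · have := inv_pos.2 ht
    nlinarith

lemma continuousOn_radialScaling {s : Set E} {c : E → ℝ} (hc : ContinuousOn c s)
    (hs : ∀ x ∈ s, x ≠ 0 ∧ c x ≠ 0) : ContinuousOn (fun x => radialScaling x (c x)) s := by
  have hrank : Continuous fun e : E => rankOne ℝ e e :=
    (rankOne ℝ (E := E) (F := E)).continuous₂.comp (continuous_id.prodMk continuous_id)
  have he : ContinuousOn (fun x : E => ‖x‖⁻¹ • x) s :=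
    (continuous_norm.continuousOn.inv₀ fun x hx => norm_ne_zero_iff.2 (hs x hx).1).smul
      continuousOn_id
  have hP := hrank.comp_continuousOn he
  exact (hc.smul hP).add ((hc.inv₀ fun x hx => (hs x hx).2).smul (continuousOn_const.sub hP))

end RadialScaling

lemma hasDerivAt_ite_lt {F : Type*} [NormedAddCommGroup F] [NormedSpace ℝ F] {f g : ℝ → F}
    {a : ℝ} {f' : F} (hf : HasDerivAt f f' a) (hg : HasDerivAt g f' a) (hfg : f a = g a) :
    HasDerivAt (fun r => if r < a then f r else g r) f' a := by
  have hIic : HasDerivWithinAt (fun r => if r < a then f r else g r) f' (Iic a) a := by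
    refine hf.hasDerivWithinAt.congr (fun r hr => ?_) (by simp [hfg])
    rcases (mem_Iic.1 hr).lt_or_eq with h | rfl
    · simp [h]
    · simp [hfg]
  have hIci : HasDerivWithinAt (fun r => if r < a then f r else g r) f' (Ici a) a :=
    hg.hasDerivWithinAt.congr (fun r hr => if_neg (not_lt.2 hr)) (if_neg (lt_irrefl a))
  simpa [Iic_union_Ici] using hIic.union hIci

lemma continuousOn_ite_le {β : Type*} [TopologicalSpace β] {f g : ℝ → β} {s : Set ℝ} {a : ℝ}
    (hf : ContinuousOn f (s ∩ Iic a)) (hg : ContinuousOn g (s ∩ Ici a)) (hfg : f a = g a) :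
    ContinuousOn (fun r => if r ≤ a then f r else g r) s := by
  refine ContinuousOn.if (fun r hr => ?_) ?_ ?_
  · rw [show {r : ℝ | r ≤ a} = Iic a from rfl, frontier_Iic] at hr
    rw [hr.2]; exact hfg
  · rwa [show {r : ℝ | r ≤ a} = Iic a from rfl, closure_Iic]
  · rwa [show {r : ℝ | ¬r ≤ a} = Ioi a by ext; simp, closure_Ioi]

section Compression

variable {a b R r : ℝ}

def compressionDen (a b R r : ℝ) : ℝ := (b - r) * (R - b) + (b - a) ^ 2

def compressionMap (a b R r : ℝ) : ℝ :=
  (a ^ 2 * (R - b) + r * (a ^ 2 + (b - 2 * a) * R)) / compressionDen a b R r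

def compressedCoord (a b R r : ℝ) : ℝ := if r < a then r else compressionMap a b R r

lemma compressionDen_pos (hab : a < b) (hbR : b ≤ R) (hr : r ≤ b) :
    0 < compressionDen a b R r := by
  unfold compressionDen
  have : 0 ≤ (b - r) * (R - b) := mul_nonneg (by linarith) (by linarith)
  nlinarith [pow_pos (sub_pos.2 hab) 2]

lemma compressionDen_self (a b R : ℝ) : compressionDen a b R a = (b - a) * (R - a) := by
  unfold compressionDen; ring

lemma compressionMap_sub_self (hr : compressionDen a b R r ≠ 0) :
    compressionMap a b R r - a = (r - a) * ((b - a) * (R - a)) / compressionDen a b R r := by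
  rw [compressionMap, eq_div_iff hr, sub_mul, div_mul_cancel₀ _ hr]
  unfold compressionDen; ring

lemma compressionMap_self (h : (b - a) * (R - a) ≠ 0) : compressionMap a b R a = a := by
  have hD : compressionDen a b R a ≠ 0 := by rwa [compressionDen_self]
  have := compressionMap_sub_self hD
  rwa [sub_self, zero_mul, zero_div, sub_eq_zero] at this

lemma le_compressionMap (hab : a < b) (hbR : b ≤ R) (har : a ≤ r) (hrb : r ≤ b) :
    a ≤ compressionMap a b R r := by
  have hD := compressionDen_pos hab hbR hrb
  rw [← sub_nonneg, compressionMap_sub_self hD.ne']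
  have : 0 ≤ (r - a) * ((b - a) * (R - a)) :=
    mul_nonneg (by linarith) (mul_nonneg (by linarith) (by linarith))
  positivity

lemma hasDerivAt_compressionMap (hr : compressionDen a b R r ≠ 0) :
    HasDerivAt (compressionMap a b R)
      (((b - a) * (R - a)) ^ 2 / compressionDen a b R r ^ 2) r := by
  have hnum : HasDerivAt (fun r => a ^ 2 * (R - b) + r * (a ^ 2 + (b - 2 * a) * R))
      (a ^ 2 + (b - 2 * a) * R) r := by
    simpa using
      ((hasDerivAt_id r).mul_const (a ^ 2 + (b - 2 * a) * R)).const_add (a ^ 2 * (R - b))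
  have hden : HasDerivAt (fun r => (b - r) * (R - b) + (b - a) ^ 2) (-(R - b)) r := by
    simpa using (((hasDerivAt_id r).const_sub b).mul_const (R - b)).add_const ((b - a) ^ 2)
  refine (hnum.div hden hr).congr_deriv ?_
  unfold compressionDen at hr ⊢
  field_simp
  ring

lemma hasDerivAt_compressedCoord (hab : a < b) (hbR : b < R) (hrb : r ≤ b) :
    HasDerivAt (compressedCoord a b R)
      (if r ≤ a then 1 else ((b - a) * (R - a)) ^ 2 / compressionDen a b R r ^ 2) r := by
  have hD := (compressionDen_pos hab hbR.le hrb).ne'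
  rcases lt_trichotomy r a with h | rfl | h
  · rw [if_pos h.le]
    refine (hasDerivAt_id r).congr_of_eventuallyEq ?_
    filter_upwards [Iio_mem_nhds h] with s hs using if_pos hs
  · have hK : (b - r) * (R - r) ≠ 0 := mul_ne_zero (by linarith) (by linarith)
    rw [if_pos le_rfl]
    refine hasDerivAt_ite_lt (hasDerivAt_id r) ?_ (compressionMap_self hK).symm
    have := hasDerivAt_compressionMap hD
    rwa [compressionDen_self, div_self (pow_ne_zero 2 hK)] at this
  · rw [if_neg h.not_ge]
    refine (hasDerivAt_compressionMap hD).congr_of_eventuallyEq ?_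
    filter_upwards [Ioi_mem_nhds h] with s hs using if_neg (not_lt.2 hs.le)

end Compression

structure IsAdmissibleProfile (a b : ℝ) (ζ : ℝ → ℝ) : Prop where
  continuousOn : ContinuousOn ζ (Ioc 0 b)
  continuousOn_deriv : ContinuousOn (deriv ζ) (Ioc 0 b)
  pos : ∀ r ∈ Ioc 0 b, 0 < ζ r
  deriv_pos : ∀ r ∈ Ioc 0 b, 0 < deriv ζ r
  eq_self : ∀ r ∈ Ioc 0 a, ζ r = r
  deriv_eq_one : ∀ r ∈ Ioc 0 a, deriv ζ r = 1

lemma isAdmissibleProfile_compressedCoord {a b R : ℝ} (ha : 0 < a) (hab : a < b) (hbR : b < R) :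
    IsAdmissibleProfile a b (compressedCoord a b R) := by
  have hderiv : EqOn (deriv (compressedCoord a b R))
      (fun r => if r ≤ a then 1 else ((b - a) * (R - a)) ^ 2 / compressionDen a b R r ^ 2)
      (Ioc 0 b) := fun r hr => (hasDerivAt_compressedCoord hab hbR hr.2).deriv
  have hK : 0 < (b - a) * (R - a) := mul_pos (by linarith) (by linarith)
  refine ⟨fun r hr => (hasDerivAt_compressedCoord hab hbR hr.2).continuousAt.continuousWithinAt,
    ContinuousOn.congr ?_ hderiv, fun r hr => ?_, fun r hr => ?_, fun r hr => ?_,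
    fun r hr => (hderiv ⟨hr.1, hr.2.trans hab.le⟩).trans (if_pos hr.2)⟩
  · refine continuousOn_ite_le continuousOn_const ?_ ?_
    · refine continuousOn_const.div (ContinuousOn.pow ?_ 2) fun r hr =>
        (pow_pos (compressionDen_pos hab hbR.le hr.1.2) 2).ne'
      exact (continuous_const.sub continuous_id |>.mul continuous_const |>.add
        continuous_const).continuousOn
    · rw [compressionDen_self, div_self (pow_pos hK 2).ne']
  · unfold compressedCoord
    split_ifs with h
    · exact hr.1
    · exact ha.trans_le (le_compressionMap hab hbR.le (not_lt.1 h) hr.2)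
  · rw [hderiv hr]
    dsimp only
    split_ifs
    · exact one_pos
    · exact div_pos (pow_pos hK 2) (pow_pos (compressionDen_pos hab hbR.le hr.2) 2)
  · unfold compressedCoord
    rcases hr.2.lt_or_eq with h | rfl
    · exact if_pos h
    · rw [if_neg (lt_irrefl r), compressionMap_self hK.ne']

namespace IsAdmissibleProfile

variable {a b : ℝ} {ζ β : ℝ → ℝ}

lemma beta_pos (hζ : IsAdmissibleProfile a b ζ) (hβ0 : β 0 = 1)
    (hβ : ∀ r : ℝ, 0 < r → r ≤ b → β r = ζ r * deriv ζ r / r) : ∀ r ∈ Icc 0 b, 0 < β r := by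
  rintro r ⟨hr0, hrb⟩
  rcases hr0.eq_or_lt with rfl | hr0
  · rw [hβ0]; exact one_pos
  · rw [hβ r hr0 hrb]
    have := hζ.pos r ⟨hr0, hrb⟩
    have := hζ.deriv_pos r ⟨hr0, hrb⟩
    positivity

lemma continuousOn_beta (hζ : IsAdmissibleProfile a b ζ) (ha : 0 < a) (hab : a ≤ b)
    (hβ0 : β 0 = 1) (hβ : ∀ r : ℝ, 0 < r → r ≤ b → β r = ζ r * deriv ζ r / r) :
    ContinuousOn β (Icc 0 b) := by
  refine continuousOn_of_locally_continuousOn fun r _ => ?_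
  rcases lt_or_ge r a with hra | hra
  · refine ⟨Iio a, isOpen_Iio, hra,
      (continuousOn_const (c := (1 : ℝ))).congr fun s ⟨⟨hs0, _⟩, hsa⟩ => ?_⟩
    rcases hs0.eq_or_lt with rfl | hs0
    · exact hβ0
    · have hs : s ∈ Ioc 0 a := ⟨hs0, le_of_lt hsa⟩
      rw [hβ s hs0 (hs.2.trans hab), hζ.eq_self s hs, hζ.deriv_eq_one s hs, mul_one,
        div_self hs0.ne']
  · refine ⟨Ioi 0, isOpen_Ioi, ha.trans_le hra, ?_⟩
    have hsub : Icc 0 b ∩ Ioi 0 ⊆ Ioc 0 b := fun s hs => ⟨hs.2, hs.1.2⟩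
    exact (((hζ.continuousOn.mul hζ.continuousOn_deriv).div continuousOn_id
      fun s hs => hs.1.ne').mono hsub).congr fun s hs => hβ s hs.2 hs.1.2

lemma continuousOn_div_mul_deriv (hζ : IsAdmissibleProfile a b ζ) :
    ContinuousOn (fun r => ζ r / (r * deriv ζ r)) (Ioc 0 b) :=
  hζ.continuousOn.div (continuousOn_id.mul hζ.continuousOn_deriv) fun r hr =>
    (mul_pos hr.1 (hζ.deriv_pos r hr)).ne'

lemma div_mul_deriv_pos (hζ : IsAdmissibleProfile a b ζ) {r : ℝ} (hr : r ∈ Ioc 0 b) :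
    0 < ζ r / (r * deriv ζ r) :=
  div_pos (hζ.pos r hr) (mul_pos hr.1 (hζ.deriv_pos r hr))

section Operator

variable {E : Type*} [NormedAddCommGroup E] [InnerProductSpace ℝ E] {M : E → E →L[ℝ] E}
  (hM1 : ∀ x : E, ‖x‖ ≤ a → M x = ContinuousLinearMap.id ℝ E)
  (hM2 : ∀ x : E, a < ‖x‖ → ‖x‖ ≤ b → ∀ w,
    M x w = (ζ ‖x‖ / (‖x‖ * deriv ζ ‖x‖)) • radialProj x w +
      ((‖x‖ * deriv ζ ‖x‖) / ζ ‖x‖) • (w - radialProj x w))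
include hM1 hM2

lemma eq_radialScaling (hζ : IsAdmissibleProfile a b ζ) {x : E} (hx0 : x ≠ 0) (hxb : ‖x‖ ≤ b) :
    M x = radialScaling x (ζ ‖x‖ / (‖x‖ * deriv ζ ‖x‖)) := by
  rcases le_or_gt ‖x‖ a with hxa | hxa
  · have hx : ‖x‖ ∈ Ioc 0 a := ⟨norm_pos_iff.2 hx0, hxa⟩
    rw [hM1 x hxa, hζ.eq_self _ hx, hζ.deriv_eq_one _ hx, mul_one, div_self hx.1.ne',
      radialScaling_one]
  · ext1 w
    rw [hM2 x hxa hxb w, radialScaling_apply, inv_div]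

lemma inner_apply_comm (hζ : IsAdmissibleProfile a b ζ) (ha : 0 ≤ a) {x : E} (hxb : ‖x‖ ≤ b)
    (w z : E) : ⟪M x w, z⟫ = ⟪w, M x z⟫ := by
  rcases le_or_gt ‖x‖ a with hxa | hxa
  · rw [hM1 x hxa]; rfl
  · rw [hζ.eq_radialScaling hM1 hM2 (norm_pos_iff.1 (ha.trans_lt hxa)) hxb,
      inner_radialScaling_comm]

lemma inner_apply_self_pos (hζ : IsAdmissibleProfile a b ζ) (ha : 0 ≤ a) {x : E}
    (hxb : ‖x‖ ≤ b) {w : E} (hw : w ≠ 0) : 0 < ⟪M x w, w⟫ := by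
  rcases le_or_gt ‖x‖ a with hxa | hxa
  · rw [hM1 x hxa]; exact real_inner_self_pos.2 hw
  · have hx : 0 < ‖x‖ := ha.trans_lt hxa
    rw [hζ.eq_radialScaling hM1 hM2 (norm_pos_iff.1 hx) hxb]
    exact inner_radialScaling_self_pos x (hζ.div_mul_deriv_pos ⟨hx, hxb⟩) hw

lemma continuousOn_operator (hζ : IsAdmissibleProfile a b ζ) (ha : 0 < a) :
    ContinuousOn M (Metric.closedBall 0 b) := by
  refine continuousOn_of_locally_continuousOn fun x _ => ?_
  rcases eq_or_ne x 0 with rfl | hx0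
  · refine ⟨Metric.ball 0 a, Metric.isOpen_ball, Metric.mem_ball_self ha,
      continuousOn_const.congr fun y hy => hM1 y (mem_ball_zero_iff.1 hy.2).le⟩
  · refine ⟨{0}ᶜ, isOpen_compl_singleton, hx0, ?_⟩
    have hnorm : MapsTo (‖·‖) (Metric.closedBall (0 : E) b ∩ {0}ᶜ) (Ioc 0 b) := fun y hy =>
      ⟨norm_pos_iff.2 hy.2, mem_closedBall_zero_iff.1 hy.1⟩
    have hc := hζ.continuousOn_div_mul_deriv.comp continuous_norm.continuousOn hnorm
    refine (continuousOn_radialScaling hc fun y hy =>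
      ⟨hy.2, (hζ.div_mul_deriv_pos (hnorm hy)).ne'⟩).congr fun y hy =>
        hζ.eq_radialScaling hM1 hM2 hy.2 (mem_closedBall_zero_iff.1 hy.1)

end Operator

end IsAdmissibleProfile

/-- d = 2: For the compressed coordinate transformation `ζ`, with
`β(0) = 1`, `β(r) = ζ(r)ζ'(r)/r` for `0 < r ≤ b`, and `M(x) = I` for `|x| ≤ a`,
`M(x)w = (ζ(r)/(rζ'(r))) P_x(w) + (rζ'(r)/ζ(r))(w − P_x(w))` for `a < |x| ≤ b` (`r = |x|`),
the function `β` is continuous and strictly positive on `[0, b]`, each `M(x)` is a symmetric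
positive definite linear map, and `x ↦ M(x)` is continuous on the closed ball of radius `b`. -/
theorem stmt11 (a b R : ℝ) (ha : 0 < a) (hab : a < b) (hbR : b < R)
    (η ζ : ℝ → ℝ)
    (hη : ∀ r : ℝ, η r =
      (a ^ 2 * (R - b) + r * (a ^ 2 + (b - 2 * a) * R)) / ((b - r) * (R - b) + (b - a) ^ 2))
    (hζ : ∀ r : ℝ, ζ r = if r < a then r else η r)
    (β : ℝ → ℝ) (hβ0 : β 0 = 1)
    (hβ : ∀ r : ℝ, 0 < r → r ≤ b → β r = ζ r * deriv ζ r / r)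
    (M : EuclideanSpace ℝ (Fin 2) → (EuclideanSpace ℝ (Fin 2) →L[ℝ] EuclideanSpace ℝ (Fin 2)))
    (hM1 : ∀ x : EuclideanSpace ℝ (Fin 2), ‖x‖ ≤ a →
      M x = ContinuousLinearMap.id ℝ (EuclideanSpace ℝ (Fin 2)))
    (hM2 : ∀ x : EuclideanSpace ℝ (Fin 2), a < ‖x‖ → ‖x‖ ≤ b → ∀ w,
      M x w = (ζ ‖x‖ / (‖x‖ * deriv ζ ‖x‖)) • radialProj x w +
        ((‖x‖ * deriv ζ ‖x‖) / ζ ‖x‖) • (w - radialProj x w)) :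
    ContinuousOn β (Set.Icc 0 b) ∧
    (∀ r ∈ Set.Icc (0 : ℝ) b, 0 < β r) ∧
    (∀ x : EuclideanSpace ℝ (Fin 2), ‖x‖ ≤ b →
      (∀ w z : EuclideanSpace ℝ (Fin 2), ⟪M x w, z⟫ = ⟪w, M x z⟫) ∧
      (∀ w : EuclideanSpace ℝ (Fin 2), w ≠ 0 → 0 < ⟪M x w, w⟫)) ∧
    ContinuousOn M (Metric.closedBall (0 : EuclideanSpace ℝ (Fin 2)) b) := by
  obtain rfl : η = compressionMap a b R := funext hη
  obtain rfl : ζ = compressedCoord a b R := funext hζ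
  have hprofile := isAdmissibleProfile_compressedCoord ha hab hbR
  exact ⟨hprofile.continuousOn_beta ha hab.le hβ0 hβ, hprofile.beta_pos hβ0 hβ,
    fun x hx => ⟨hprofile.inner_apply_comm hM1 hM2 ha.le hx,
      fun _ hw => hprofile.inner_apply_self_pos hM1 hM2 ha.le hx hw⟩,
    hprofile.continuousOn_operator hM1 hM2 ha⟩

end
end

section
/- Let d = 3 and 0 < a < b < R, and let ζ be the compressed coordinate transformation. Define β : [0, b] → ℝ by β(0) = 1 and β(r) = ζ(r)²ζ'(r)/r² for r ∈ (0, b], and define the matrix field M on the closed ball {x ∈ ℝ³ : |x| ≤ b} by M(x) = I for |x| ≤ a and M(x)w = (ζ(r)²/(r² ζ'(r))) P_x(w) + ζ'(r)(w − P_x(w)) for a < |x| ≤ b, where r = |x|. Then β is continuous and strictly positive on [0, b], and for every x with |x| ≤ b, M(x) is a symmetric positive definite linear map, and x ↦ M(x) is continuous on the closed ball of radius b. -/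
/-!
With `den r = (b - r)(R - b) + (b - a)² > 0` for `r ≤ b`, the Möbius map satisfies
`η r - a = (r - a)(b - a)(R - a) / den r` and `η' = ((b - a)(R - a) / den)²`, so on `[a, b]`
`η ≥ a > 0`, `η' > 0`, and `η(a) = a`, `η'(a) = 1`. Hence `ζ` is differentiable on `(-∞, b]`
with `ζ' r = η'(max r a)`, which is continuous and positive. The weight
`β = ζ² ζ' / r²` (the Jacobian of `x ↦ ζ(|x|) e_r`) and the field `M` equal `1`, resp. `I`,
on the sphere `|x| = a` as well, so the inner and outer pieces glue along closed sets.
Finally `M(x) = α P + γ (I - P)` with `P` the orthogonal projection onto `ℝ x` and `α, γ > 0`,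
so `⟪M w, w⟫ = α ‖P w‖² + γ ‖w - P w‖²` is positive for `w ≠ 0`.
-/

open scoped RealInnerProductSpace

noncomputable section

open Set

namespace CompressedCoordinate

variable {a b R r : ℝ}

def den (a b R r : ℝ) : ℝ := (b - r) * (R - b) + (b - a) ^ 2

def eta (a b R r : ℝ) : ℝ := (a ^ 2 * (R - b) + r * (a ^ 2 + (b - 2 * a) * R)) / den a b R r

def etaDeriv (a b R r : ℝ) : ℝ := ((b - a) * (R - a) / den a b R r) ^ 2

lemma den_pos (hab : a < b) (hbR : b < R) (hr : r ≤ b) : 0 < den a b R r := by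
  have : 0 ≤ (b - r) * (R - b) := mul_nonneg (by linarith) (by linarith)
  unfold den
  nlinarith [sq_pos_of_pos (sub_pos.2 hab)]

lemma den_self : den a b R a = (b - a) * (R - a) := by unfold den; ring

lemma eta_eq (hr : den a b R r ≠ 0) :
    eta a b R r = a + (r - a) * ((b - a) * (R - a)) / den a b R r := by
  rw [eta, add_div' _ _ _ hr]
  congr 1
  unfold den
  ring

lemma eta_self (hab : a < b) (hbR : b < R) : eta a b R a = a := by
  rw [eta_eq (den_pos hab hbR hab.le).ne', sub_self, zero_mul, zero_div, add_zero]

lemma eta_pos (ha : 0 < a) (hab : a < b) (hbR : b < R) (har : a ≤ r) (hrb : r ≤ b) :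
    0 < eta a b R r := by
  have hden := den_pos hab hbR hrb
  rw [eta_eq hden.ne']
  have : 0 ≤ (r - a) * ((b - a) * (R - a)) / den a b R r := by
    have := sub_nonneg.2 har
    have := sub_pos.2 hab
    have : 0 < R - a := by linarith
    positivity
  linarith

lemma hasDerivAt_eta (hr : den a b R r ≠ 0) :
    HasDerivAt (eta a b R) (etaDeriv a b R r) r := by
  have hden : HasDerivAt (den a b R) (-(R - b)) r := by
    unfold den
    simpa using (((hasDerivAt_id r).const_sub b).mul_const (R - b)).add_const ((b - a) ^ 2)
  have hnum : HasDerivAt (fun s => a ^ 2 * (R - b) + s * (a ^ 2 + (b - 2 * a) * R))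
      (a ^ 2 + (b - 2 * a) * R) r := by
    simpa using
      ((hasDerivAt_id r).mul_const (a ^ 2 + (b - 2 * a) * R)).const_add (a ^ 2 * (R - b))
  refine (hnum.div hden hr).congr_deriv ?_
  rw [etaDeriv, div_pow, div_eq_div_iff (pow_ne_zero 2 hr) (pow_ne_zero 2 hr)]
  unfold den
  ring

lemma etaDeriv_self (hab : a < b) (hbR : b < R) : etaDeriv a b R a = 1 := by
  rw [etaDeriv, den_self, div_self (mul_pos (sub_pos.2 hab) (by linarith)).ne', one_pow]

lemma etaDeriv_pos (hab : a < b) (hbR : b < R) (hr : r ≤ b) : 0 < etaDeriv a b R r := by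
  have := den_pos hab hbR hr
  have := sub_pos.2 hab
  have : 0 < R - a := by linarith
  unfold etaDeriv
  positivity

lemma continuousOn_etaDeriv (hab : a < b) (hbR : b < R) :
    ContinuousOn (etaDeriv a b R) (Iic b) := by
  have hden : Continuous (den a b R) := by unfold den; fun_prop
  exact (continuousOn_const.div hden.continuousOn fun r hr => (den_pos hab hbR hr).ne').pow 2

variable {ζ : ℝ → ℝ}

lemma zeta_eq_self (hab : a < b) (hbR : b < R)
    (hζ : ∀ r, ζ r = if r < a then r else eta a b R r) (hr : r ≤ a) : ζ r = r := by
  rcases hr.lt_or_eq with hr | rfl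
  · rw [hζ, if_pos hr]
  · rw [hζ, if_neg (lt_irrefl r), eta_self hab hbR]

lemma zeta_eq_eta (hζ : ∀ r, ζ r = if r < a then r else eta a b R r) (hr : a ≤ r) :
    ζ r = eta a b R r := by
  rw [hζ, if_neg hr.not_gt]

lemma hasDerivAt_zeta (hab : a < b) (hbR : b < R)
    (hζ : ∀ r, ζ r = if r < a then r else eta a b R r) (hr : r ≤ b) :
    HasDerivAt ζ (etaDeriv a b R (max r a)) r := by
  rcases lt_trichotomy r a with hra | hra | hra
  · rw [max_eq_right hra.le, etaDeriv_self hab hbR]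
    refine (hasDerivAt_id r).congr_of_eventuallyEq ?_
    filter_upwards [Iio_mem_nhds hra] with s hs using zeta_eq_self hab hbR hζ (le_of_lt hs)
  · subst r
    rw [max_self]
    have hleft : HasDerivWithinAt ζ (etaDeriv a b R a) (Iic a) a := by
      rw [etaDeriv_self hab hbR]
      exact (hasDerivWithinAt_id a _).congr (fun s hs => zeta_eq_self hab hbR hζ hs)
        (zeta_eq_self hab hbR hζ le_rfl)
    have hright : HasDerivWithinAt ζ (etaDeriv a b R a) (Ici a) a :=
      (hasDerivAt_eta (den_pos hab hbR hr).ne').hasDerivWithinAt.congr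
        (fun s hs => zeta_eq_eta hζ hs) (zeta_eq_eta hζ le_rfl)
    simpa [Iic_union_Ici] using hleft.union hright
  · rw [max_eq_left hra.le]
    refine (hasDerivAt_eta (den_pos hab hbR hr).ne').congr_of_eventuallyEq ?_
    filter_upwards [Ioi_mem_nhds hra] with s hs using zeta_eq_eta hζ (le_of_lt hs)

lemma deriv_zeta_eq_one (hab : a < b) (hbR : b < R)
    (hζ : ∀ r, ζ r = if r < a then r else eta a b R r) (hr : r ≤ a) : deriv ζ r = 1 := by
  rw [(hasDerivAt_zeta hab hbR hζ (hr.trans hab.le)).deriv, max_eq_right hr,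
    etaDeriv_self hab hbR]

lemma deriv_zeta_pos (hab : a < b) (hbR : b < R)
    (hζ : ∀ r, ζ r = if r < a then r else eta a b R r) (hr : r ≤ b) : 0 < deriv ζ r := by
  rw [(hasDerivAt_zeta hab hbR hζ hr).deriv]
  exact etaDeriv_pos hab hbR (max_le hr hab.le)

lemma zeta_pos (ha : 0 < a) (hab : a < b) (hbR : b < R)
    (hζ : ∀ r, ζ r = if r < a then r else eta a b R r) (hr : r ∈ Ioc 0 b) : 0 < ζ r := by
  rcases le_total r a with hra | hra
  · rw [zeta_eq_self hab hbR hζ hra]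
    exact hr.1
  · rw [zeta_eq_eta hζ hra]
    exact eta_pos ha hab hbR hra hr.2

lemma continuousOn_zeta (hab : a < b) (hbR : b < R)
    (hζ : ∀ r, ζ r = if r < a then r else eta a b R r) : ContinuousOn ζ (Iic b) :=
  fun _ hr => (hasDerivAt_zeta hab hbR hζ hr).continuousAt.continuousWithinAt

lemma continuousOn_deriv_zeta (hab : a < b) (hbR : b < R)
    (hζ : ∀ r, ζ r = if r < a then r else eta a b R r) : ContinuousOn (deriv ζ) (Iic b) := by
  refine ContinuousOn.congr ?_ fun r hr => (hasDerivAt_zeta hab hbR hζ hr).deriv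
  exact (continuousOn_etaDeriv hab hbR).comp (continuous_id.max continuous_const).continuousOn
    fun r hr => max_le hr hab.le

end CompressedCoordinate

section Jacobian

variable {a b : ℝ} {ζ β : ℝ → ℝ}

lemma continuousOn_jacobian (ha : 0 < a) (hab : a ≤ b)
    (hζ_id : ∀ r ∈ Ioc 0 a, ζ r = r) (hζ'_one : ∀ r ∈ Ioc 0 a, deriv ζ r = 1)
    (hζc : ContinuousOn ζ (Icc a b)) (hζ'c : ContinuousOn (deriv ζ) (Icc a b))
    (hβ0 : β 0 = 1) (hβ : ∀ r, 0 < r → r ≤ b → β r = ζ r ^ 2 * deriv ζ r / r ^ 2) :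
    ContinuousOn β (Icc 0 b) := by
  have hinner : EqOn β 1 (Icc 0 a) := by
    intro r ⟨hr0, hra⟩
    rcases hr0.eq_or_lt with rfl | hr0
    · exact hβ0
    · rw [hβ r hr0 (hra.trans hab), hζ_id r ⟨hr0, hra⟩, hζ'_one r ⟨hr0, hra⟩, mul_one,
        div_self (pow_pos hr0 2).ne', Pi.one_apply]
  have hshell : ContinuousOn (fun r => ζ r ^ 2 * deriv ζ r / r ^ 2) (Icc a b) :=
    ((hζc.pow 2).mul hζ'c).div (continuousOn_id.pow 2) fun r hr =>
      (pow_pos (ha.trans_le hr.1) 2).ne'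
  rw [← Icc_union_Icc_eq_Icc ha.le hab]
  exact (continuousOn_const.congr hinner).union_of_isClosed
    (hshell.congr fun r hr => hβ r (ha.trans_le hr.1) hr.2) isClosed_Icc isClosed_Icc

lemma jacobian_pos (hζpos : ∀ r ∈ Ioc 0 b, 0 < ζ r) (hζ'pos : ∀ r ∈ Ioc 0 b, 0 < deriv ζ r)
    (hβ0 : β 0 = 1) (hβ : ∀ r, 0 < r → r ≤ b → β r = ζ r ^ 2 * deriv ζ r / r ^ 2) :
    ∀ r ∈ Icc 0 b, 0 < β r := by
  intro r ⟨hr0, hrb⟩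
  rcases hr0.eq_or_lt with rfl | hr0
  · rw [hβ0]
    exact one_pos
  · have := hζpos r ⟨hr0, hrb⟩
    have := hζ'pos r ⟨hr0, hrb⟩
    rw [hβ r hr0 hrb]
    positivity

end Jacobian

section RadialField

variable {E : Type*} [NormedAddCommGroup E] [InnerProductSpace ℝ E]

section Projection

variable (K : Submodule ℝ E) [K.HasOrthogonalProjection]

lemma inner_starProjection_combination_symm (α γ : ℝ) (w z : E) :
    ⟪α • K.starProjection w + γ • (w - K.starProjection w), z⟫ =
      ⟪w, α • K.starProjection z + γ • (z - K.starProjection z)⟫ := by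
  simp only [inner_add_left, inner_add_right, inner_sub_left, inner_sub_right,
    real_inner_smul_left, real_inner_smul_right, K.inner_starProjection_left_eq_right]

lemma inner_starProjection_combination_self (α γ : ℝ) (w : E) :
    ⟪α • K.starProjection w + γ • (w - K.starProjection w), w⟫ =
      α * ‖K.starProjection w‖ ^ 2 + γ * ‖w - K.starProjection w‖ ^ 2 := by
  have horth : ⟪w - K.starProjection w, K.starProjection w⟫ = 0 :=
    K.starProjection_inner_eq_zero w _ (K.starProjection_apply_mem w)
  have hsplit (v : E) : ⟪v, w⟫ = ⟪v, K.starProjection w⟫ + ⟪v, w - K.starProjection w⟫ := by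
    rw [← inner_add_right, add_sub_cancel]
  rw [inner_add_left, real_inner_smul_left, real_inner_smul_left, hsplit (K.starProjection w),
    hsplit (w - K.starProjection w), horth, real_inner_comm (w - K.starProjection w), horth,
    real_inner_self_eq_norm_sq, real_inner_self_eq_norm_sq, add_zero, zero_add]

lemma inner_starProjection_combination_pos {α γ : ℝ} (hα : 0 < α) (hγ : 0 < γ) {w : E}
    (hw : w ≠ 0) : 0 < ⟪α • K.starProjection w + γ • (w - K.starProjection w), w⟫ := by
  rw [inner_starProjection_combination_self]
  by_cases hP : K.starProjection w = 0
  · rw [hP, sub_zero]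
    have := norm_pos_iff.2 hw
    positivity
  · have := norm_pos_iff.2 hP
    positivity

end Projection

lemma radialProj_eq_starProjection (x w : E) : radialProj x w = (ℝ ∙ x).starProjection w := by
  rw [Submodule.starProjection_singleton, radialProj, real_inner_smul_right, smul_smul]
  match_scalars
  simp only [RCLike.ofReal_real_eq_id, id, real_inner_comm x w]
  ring

def radialProjCLM (x : E) : E →L[ℝ] E := (‖x‖ ^ 2)⁻¹ • (innerSL ℝ x).smulRight x

lemma radialProjCLM_apply (x w : E) : radialProjCLM x w = radialProj x w := by
  rw [radialProj_eq_starProjection, Submodule.starProjection_singleton, radialProjCLM,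
    smul_apply, ContinuousLinearMap.smulRight_apply, innerSL_apply_apply,
    smul_smul, RCLike.ofReal_real_eq_id, id, div_eq_inv_mul]

lemma continuousAt_radialProjCLM {x : E} (hx : x ≠ 0) : ContinuousAt radialProjCLM x := by
  have hsmulRight : Continuous fun y : E => (innerSL ℝ y).smulRight y :=
    ((ContinuousLinearMap.smulRightL ℝ E E).continuous.comp (innerSL ℝ).continuous).clm_apply
      continuous_id
  exact ((continuous_norm.pow 2).continuousAt.inv₀ (pow_ne_zero 2 (norm_ne_zero_iff.2 hx))).smul
    hsmulRight.continuousAt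

variable {a b : ℝ} {A Γ : ℝ → ℝ} {M : E → E →L[ℝ] E}

lemma isSymmetric_and_posDef_of_radial (hA : ∀ r ∈ Ioc a b, 0 < A r)
    (hΓ : ∀ r ∈ Ioc a b, 0 < Γ r) (hM1 : ∀ x : E, ‖x‖ ≤ a → M x = ContinuousLinearMap.id ℝ E)
    (hM2 : ∀ x : E, a < ‖x‖ → ‖x‖ ≤ b → ∀ w,
      M x w = A ‖x‖ • radialProj x w + Γ ‖x‖ • (w - radialProj x w))
    {x : E} (hx : ‖x‖ ≤ b) :
    (∀ w z, ⟪M x w, z⟫ = ⟪w, M x z⟫) ∧ ∀ w, w ≠ 0 → 0 < ⟪M x w, w⟫ := by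
  rcases le_or_gt ‖x‖ a with hxa | hxa
  · rw [hM1 x hxa]
    exact ⟨fun _ _ => rfl, fun w hw => real_inner_self_pos.2 hw⟩
  · simp only [hM2 x hxa hx, radialProj_eq_starProjection]
    exact ⟨inner_starProjection_combination_symm _ _ _,
      fun w hw => inner_starProjection_combination_pos _ (hA _ ⟨hxa, hx⟩) (hΓ _ ⟨hxa, hx⟩) hw⟩

lemma continuousOn_of_radial (ha : 0 < a) (hab : a ≤ b) (hAc : ContinuousOn A (Icc a b))
    (hΓc : ContinuousOn Γ (Icc a b)) (hAa : A a = 1) (hΓa : Γ a = 1)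
    (hM1 : ∀ x : E, ‖x‖ ≤ a → M x = ContinuousLinearMap.id ℝ E)
    (hM2 : ∀ x : E, a < ‖x‖ → ‖x‖ ≤ b → ∀ w,
      M x w = A ‖x‖ • radialProj x w + Γ ‖x‖ • (w - radialProj x w)) :
    ContinuousOn M (Metric.closedBall 0 b) := by
  set shell := {x : E | ‖x‖ ∈ Icc a b}
  have hshell : EqOn M (fun x => A ‖x‖ • radialProjCLM x +
      Γ ‖x‖ • (ContinuousLinearMap.id ℝ E - radialProjCLM x)) shell := by
    intro x ⟨hxa, hxb⟩
    rcases hxa.eq_or_lt with h | h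
    · dsimp only
      rw [hM1 x h.ge, ← h, hAa, hΓa, one_smul, one_smul, add_sub_cancel]
    · ext w
      simp [hM2 x h hxb w, radialProjCLM_apply]
  have hradial : ContinuousOn radialProjCLM shell := fun x hx =>
    (continuousAt_radialProjCLM (norm_pos_iff.1 (ha.trans_le hx.1))).continuousWithinAt
  have hcoeff {f : ℝ → ℝ} (hf : ContinuousOn f (Icc a b)) :
      ContinuousOn (fun x : E => f ‖x‖) shell :=
    hf.comp continuous_norm.continuousOn fun _ hx => hx
  have hsplit : Metric.closedBall (0 : E) b = Metric.closedBall 0 a ∪ shell := by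
    ext x
    simp only [Metric.mem_closedBall, dist_zero_right, mem_union, mem_ofPred_eq, mem_Icc, shell]
    constructor
    · intro hx
      exact (le_total ‖x‖ a).imp id fun h => ⟨h, hx⟩
    · rintro (hx | hx)
      exacts [hx.trans hab, hx.2]
  have hinner : ContinuousOn M (Metric.closedBall 0 a) :=
    continuousOn_const.congr fun x hx => hM1 x (mem_closedBall_zero_iff.1 hx)
  have houter : ContinuousOn M shell :=
    (((hcoeff hAc).smul hradial).add ((hcoeff hΓc).smul (continuousOn_const.sub hradial))).congr
      hshell
  rw [hsplit]
  exact hinner.union_of_isClosed houter Metric.isClosed_closedBall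
    (isClosed_Icc.preimage continuous_norm)

end RadialField

open CompressedCoordinate

/-- d = 3: For the compressed coordinate transformation `ζ`, with
`β(0) = 1`, `β(r) = ζ(r)²ζ'(r)/r²` for `0 < r ≤ b`, and `M(x) = I` for `|x| ≤ a`,
`M(x)w = (ζ(r)²/(r²ζ'(r))) P_x(w) + ζ'(r)(w − P_x(w))` for `a < |x| ≤ b` (`r = |x|`),
the function `β` is continuous and strictly positive on `[0, b]`, each `M(x)` is a symmetric
positive definite linear map, and `x ↦ M(x)` is continuous on the closed ball of radius `b`. -/
theorem stmt12 (a b R : ℝ) (ha : 0 < a) (hab : a < b) (hbR : b < R)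
    (η ζ : ℝ → ℝ)
    (hη : ∀ r : ℝ, η r =
      (a ^ 2 * (R - b) + r * (a ^ 2 + (b - 2 * a) * R)) / ((b - r) * (R - b) + (b - a) ^ 2))
    (hζ : ∀ r : ℝ, ζ r = if r < a then r else η r)
    (β : ℝ → ℝ) (hβ0 : β 0 = 1)
    (hβ : ∀ r : ℝ, 0 < r → r ≤ b → β r = ζ r ^ 2 * deriv ζ r / r ^ 2)
    (M : EuclideanSpace ℝ (Fin 3) → (EuclideanSpace ℝ (Fin 3) →L[ℝ] EuclideanSpace ℝ (Fin 3)))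
    (hM1 : ∀ x : EuclideanSpace ℝ (Fin 3), ‖x‖ ≤ a →
      M x = ContinuousLinearMap.id ℝ (EuclideanSpace ℝ (Fin 3)))
    (hM2 : ∀ x : EuclideanSpace ℝ (Fin 3), a < ‖x‖ → ‖x‖ ≤ b → ∀ w,
      M x w = (ζ ‖x‖ ^ 2 / (‖x‖ ^ 2 * deriv ζ ‖x‖)) • radialProj x w +
        deriv ζ ‖x‖ • (w - radialProj x w)) :
    ContinuousOn β (Set.Icc 0 b) ∧
    (∀ r ∈ Set.Icc (0 : ℝ) b, 0 < β r) ∧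
    (∀ x : EuclideanSpace ℝ (Fin 3), ‖x‖ ≤ b →
      (∀ w z : EuclideanSpace ℝ (Fin 3), ⟪M x w, z⟫ = ⟪w, M x z⟫) ∧
      (∀ w : EuclideanSpace ℝ (Fin 3), w ≠ 0 → 0 < ⟪M x w, w⟫)) ∧
    ContinuousOn M (Metric.closedBall (0 : EuclideanSpace ℝ (Fin 3)) b) := by
  obtain rfl : η = eta a b R := funext hη
  have hζc : ContinuousOn ζ (Icc a b) := (continuousOn_zeta hab hbR hζ).mono Icc_subset_Iic_self
  have hζ'c : ContinuousOn (deriv ζ) (Icc a b) :=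
    (continuousOn_deriv_zeta hab hbR hζ).mono Icc_subset_Iic_self
  have hζpos (r : ℝ) (hr : r ∈ Ioc 0 b) : 0 < ζ r := zeta_pos ha hab hbR hζ hr
  have hζ'pos (r : ℝ) (hr : r ∈ Ioc 0 b) : 0 < deriv ζ r := deriv_zeta_pos hab hbR hζ hr.2
  have hshell {r : ℝ} (har : a ≤ r) (hrb : r ≤ b) : r ∈ Ioc 0 b := ⟨ha.trans_le har, hrb⟩
  refine ⟨continuousOn_jacobian ha hab.le (fun r hr => zeta_eq_self hab hbR hζ hr.2)
      (fun r hr => deriv_zeta_eq_one hab hbR hζ hr.2) hζc hζ'c hβ0 hβ,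
    jacobian_pos hζpos hζ'pos hβ0 hβ,
    fun x hx => isSymmetric_and_posDef_of_radial (A := fun r => ζ r ^ 2 / (r ^ 2 * deriv ζ r))
      (fun r hr => ?_) (fun r hr => hζ'pos r (hshell hr.1.le hr.2)) hM1 hM2 hx,
    continuousOn_of_radial (A := fun r => ζ r ^ 2 / (r ^ 2 * deriv ζ r)) ha hab.le ?_ hζ'c ?_
      (deriv_zeta_eq_one hab hbR hζ le_rfl) hM1 hM2⟩
  · have := hζpos r (hshell hr.1.le hr.2)
    have := hζ'pos r (hshell hr.1.le hr.2)
    have := (hshell hr.1.le hr.2).1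
    positivity
  · exact (hζc.pow 2).div ((continuousOn_id.pow 2).mul hζ'c) fun r hr =>
      (mul_pos (pow_pos (hshell hr.1 hr.2).1 2) (hζ'pos r (hshell hr.1 hr.2))).ne'
  · rw [zeta_eq_self hab hbR hζ le_rfl, deriv_zeta_eq_one hab hbR hζ le_rfl, mul_one,
      div_self (pow_pos ha 2).ne']

end
end
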